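/- arXiv:math/0011166 — 12 statements merged into one kernel-verified Lean document; each statement's English description precedes it below -/
import Mathlib

section
/- For every tower of permutations 𝔖 = {(A_ξ, F_ξ, 𝔅_ξ)}_{ξ∈W} and every integer n, the set {p ∈ ℚ(𝔖) : max(a^p) > n} is dense in ℚ(𝔖). -/
/-- A finite subalgebra of the Boolean algebra `𝒫(ℕ)` of subsets of `ℕ`. -/
def IsFiniteSubalgebra (𝔅 : Set (Set ℕ)) : Prop :=
  𝔅.Finite ∧ ∅ ∈ 𝔅 ∧ Set.univ ∈ 𝔅 ∧ (∀ X ∈ 𝔅, Xᶜ ∈ 𝔅) ∧ ∀ X ∈ 𝔅, ∀ Y ∈ 𝔅, X ∪ Y ∈ 𝔅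

/-- A tower of permutations `𝔖 = {(A_ξ, F_ξ, 𝔅_ξ)}_{ξ ∈ W}` indexed by a set `W`
of ordinals. -/
structure Tower (W : Set Ordinal) where
  /-- the sets `A_ξ` -/
  A : Ordinal → Set ℕ
  /-- the permutations `F_ξ` of `ℕ` -/
  F : Ordinal → (ℕ → ℕ)
  /-- the finite subalgebras `𝔅_ξ` -/
  Alg : Ordinal → Set (Set ℕ)
  A_inf : ∀ ξ ∈ W, (A ξ).Infinite
  F_bij : ∀ ξ ∈ W, Function.Bijective (F ξ)
  F_seg : ∀ ξ ∈ W, ∀ m ∈ A ξ, Set.BijOn (F ξ) (Set.Iio m) (Set.Iio m)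
  Alg_fin : ∀ ξ ∈ W, IsFiniteSubalgebra (Alg ξ)
  Alg_mono : ∀ ξ ∈ W, ∀ ζ ∈ W, ξ < ζ → Alg ξ ⊆ Alg ζ
  A_ae_sub : ∀ ξ ∈ W, ∀ ζ ∈ W, ξ < ζ → (A ζ \ A ξ).Finite
  F_ae_eq : ∀ ξ ∈ W, ∀ ζ ∈ W, ξ < ζ → ∀ B ∈ Alg ξ,
    (symmDiff (F ζ '' B) (F ξ '' B)).Finite

/-- A condition `p = (a^p, f^p, α^p, 𝔅^p)` in the forcing `ℚ(𝔖)`.  The finite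
partial function `f^p` (whose domain is `{0, …, max(a^p) − 1}`) is modelled as a
total function on `ℕ` which is the identity from `max(a^p)` onwards. -/
structure QCond {W : Set Ordinal} (S : Tower W) where
  /-- the finite nonempty set `a^p` -/
  a : Finset ℕ
  /-- the finite partial permutation `f^p` -/
  f : ℕ → ℕ
  /-- the ordinal `α^p ∈ W` -/
  α : Ordinal
  /-- the finite subalgebra `𝔅^p` -/
  Alg : Set (Set ℕ)
  a_ne : a.Nonempty
  f_seg : ∀ m ∈ a, Set.BijOn f (Set.Iio m) (Set.Iio m)
  f_pad : ∀ i, a.max' a_ne ≤ i → f i = i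
  α_mem : α ∈ W
  max_mem : a.max' a_ne ∈ S.A α
  Alg_fin : IsFiniteSubalgebra Alg

namespace QCond

variable {W : Set Ordinal} {S : Tower W}

/-- `max (a^p)`. -/
def top (p : QCond S) : ℕ := p.a.max' p.a_ne

/-- The order `p ≤ q` on `ℚ(𝔖)`. -/
def le (p q : QCond S) : Prop :=
  p.a ⊆ q.a ∧
  q.a.filter (fun n => n ≤ p.top) = p.a ∧
  (∀ i, i < p.top → q.f i = p.f i) ∧
  p.Alg ⊆ q.Alg ∧
  p.α ≤ q.α ∧
  ({n : ℕ | n ∈ S.A q.α ∧ q.top ≤ n} ∪ ((↑q.a : Set ℕ) \ ↑p.a)) ⊆ S.A p.α ∧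
  ∀ B ∈ p.Alg ∩ S.Alg p.α,
    (∀ m ∈ q.a, ∀ n ∈ q.a, p.top ≤ m → m < n →
      q.f '' (B ∩ Set.Ico m n) = S.F p.α '' (B ∩ Set.Ico m n)) ∧
    (∀ m ∈ S.A q.α, ∀ n ∈ S.A q.α, q.top ≤ m → m < n →
      S.F q.α '' (B ∩ Set.Ico m n) = S.F p.α '' (B ∩ Set.Ico m n))

/-- A subset `D ⊆ ℚ(𝔖)` is dense. -/
def IsDense (D : Set (QCond S)) : Prop := ∀ p : QCond S, ∃ q ∈ D, le p q

/-- Two conditions are compatible. -/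
def Compatible (p q : QCond S) : Prop := ∃ r : QCond S, le p r ∧ le q r

end QCond

/-- For every tower of permutations `𝔖` and every `n`, the set
`{p ∈ ℚ(𝔖) : max(a^p) > n}` is dense in `ℚ(𝔖)`. -/
theorem dense_top_gt (W : Set Ordinal) (S : Tower W) (n : ℕ) :
    QCond.IsDense {p : QCond S | n < p.top} := by
  intro p
  obtain ⟨m, hmA, hm⟩ := (S.A_inf p.α p.α_mem).exists_gt (max n p.top)
  have hmn : n < m := lt_of_le_of_lt (le_max_left _ _) hm
  have hmt : p.top < m := lt_of_le_of_lt (le_max_right _ _) hm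
  set g : ℕ → ℕ := fun i => if i < p.top then p.f i else if i < m then S.F p.α i else i with hg
  have hgf : ∀ i < p.top, g i = p.f i := fun i hi => if_pos hi
  have hgF : ∀ i ∈ Set.Ico p.top m, g i = S.F p.α i := by
    rintro i ⟨h1, h2⟩
    simp only [hg, if_neg (not_lt.2 h1), if_pos h2]
  have hgid : ∀ i, m ≤ i → g i = i := by
    intro i hi
    simp only [hg, if_neg (not_lt.2 (le_trans (le_of_lt hmt) hi)), if_neg (not_lt.2 hi)]
  have hFt : Set.BijOn (S.F p.α) (Set.Iio p.top) (Set.Iio p.top) :=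
    S.F_seg p.α p.α_mem p.top p.max_mem
  have hFm : Set.BijOn (S.F p.α) (Set.Iio m) (Set.Iio m) :=
    S.F_seg p.α p.α_mem m hmA
  have hFinj : Function.Injective (S.F p.α) := (S.F_bij p.α p.α_mem).1
  have hFico : Set.BijOn (S.F p.α) (Set.Ico p.top m) (Set.Ico p.top m) := by
    refine ⟨?_, hFinj.injOn, ?_⟩
    · rintro x ⟨hx1, hx2⟩
      refine ⟨?_, hFm.mapsTo hx2⟩
      by_contra h
      push_neg at h
      obtain ⟨y, hy, hyx⟩ := hFt.surjOn h
      exact absurd (hFinj hyx ▸ hy) (not_lt.2 hx1)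
    · rintro y ⟨hy1, hy2⟩
      obtain ⟨x, hx, hxy⟩ := hFm.surjOn hy2
      refine ⟨x, ⟨?_, hx⟩, hxy⟩
      by_contra h
      push_neg at h
      exact absurd (hxy ▸ hFt.mapsTo h) (not_lt.2 hy1)
  have hpf : Set.BijOn p.f (Set.Iio p.top) (Set.Iio p.top) :=
    p.f_seg p.top (p.a.max'_mem p.a_ne)
  have h1 : Set.BijOn g (Set.Iio p.top) (Set.Iio p.top) :=
    hpf.congr (fun i hi => (hgf i hi).symm)
  have h2 : Set.BijOn g (Set.Ico p.top m) (Set.Ico p.top m) :=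
    hFico.congr (fun i hi => (hgF i hi).symm)
  have hunion : Set.Iio p.top ∪ Set.Ico p.top m = Set.Iio m := by
    ext x; simp only [Set.mem_union, Set.mem_Iio, Set.mem_Ico]; omega
  have hinj : Set.InjOn g (Set.Iio p.top ∪ Set.Ico p.top m) := by
    intro x hx y hy hxy
    rcases hx with hx | hx <;> rcases hy with hy | hy
    · exact h1.injOn hx hy hxy
    · exact absurd (hxy ▸ h1.mapsTo hx) (not_lt.2 (h2.mapsTo hy).1)
    · exact absurd (hxy ▸ h2.mapsTo hx).1 (not_le.2 (h1.mapsTo hy))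
    · exact h2.injOn hx hy hxy
  have hgbm : Set.BijOn g (Set.Iio m) (Set.Iio m) := by
    have := h1.union h2 hinj
    rwa [hunion] at this
  have hfseg : ∀ m' ∈ insert m p.a, Set.BijOn g (Set.Iio m') (Set.Iio m') := by
    intro m' hm'
    rcases Finset.mem_insert.1 hm' with rfl | hm'
    · exact hgbm
    · have hle : m' ≤ p.top := Finset.le_max' _ _ hm'
      exact (p.f_seg m' hm').congr fun i hi =>
        (hgf i (lt_of_lt_of_le hi hle)).symm
  have hqtop : (insert m p.a).max' (Finset.insert_nonempty m p.a) = m := by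
    refine le_antisymm (Finset.max'_le _ _ _ ?_) (Finset.le_max' _ _ (Finset.mem_insert_self _ _))
    intro x hx
    rcases Finset.mem_insert.1 hx with rfl | hx
    · exact le_refl x
    · exact le_of_lt (lt_of_le_of_lt (Finset.le_max' _ _ hx) hmt)
  refine ⟨⟨insert m p.a, g, p.α, p.Alg, Finset.insert_nonempty m p.a, hfseg, ?_, p.α_mem, ?_, p.Alg_fin⟩, ?_, ?_⟩
  · intro i hi
    rw [hqtop] at hi
    exact hgid i hi
  · rw [hqtop]; exact hmA
  · show n < (insert m p.a).max' _
    rw [hqtop]; exact hmn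
  · refine ⟨Finset.subset_insert _ _, ?_, hgf, subset_refl _, le_refl _, ?_, ?_⟩
    · ext x
      simp only [Finset.mem_filter, Finset.mem_insert]
      constructor
      · rintro ⟨rfl | hx, hle⟩
        · exact absurd hle (not_le.2 hmt)
        · exact hx
      · intro hx
        exact ⟨Or.inr hx, Finset.le_max' _ _ hx⟩
    · rintro x (⟨hx, -⟩ | hx)
      · exact hx
      · simp only [Set.mem_diff, Finset.coe_insert, Set.mem_insert_iff, Finset.mem_coe] at hx
        rcases hx.1 with rfl | h
        · exact hmA
        · exact absurd h hx.2
    · intro B hB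
      constructor
      · intro m₁ hm₁ n₁ hn₁ hle hlt
        have hn₁m : n₁ ≤ m := by
          rcases Finset.mem_insert.1 hn₁ with rfl | h
          · exact le_refl _
          · exact le_of_lt (lt_of_le_of_lt (Finset.le_max' _ _ h) hmt)
        refine Set.image_congr fun x hx => ?_
        exact hgF x ⟨le_trans hle hx.2.1, lt_of_lt_of_le hx.2.2 hn₁m⟩
      · intro m₁ _ n₁ _ _ _
        rfl
end

section
/- For every tower of permutations 𝔖 = {(A_ξ, F_ξ, 𝔅_ξ)}_{ξ∈W}, every p ∈ ℚ(𝔖), and every integer n, there exists q ∈ ℚ(𝔖) with p ≤ q, max(a^q) > n, α^q = α^p, and 𝔅^q = 𝔅^p. -/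
lemma bijOn_glue {f F : ℕ → ℕ} {a b : ℕ} (hab : a ≤ b)
    (hf : Set.BijOn f (Set.Iio a) (Set.Iio a))
    (hFa : Set.BijOn F (Set.Iio a) (Set.Iio a))
    (hFb : Set.BijOn F (Set.Iio b) (Set.Iio b)) :
    Set.BijOn (fun i => if i < a then f i else F i) (Set.Iio b) (Set.Iio b) := by
  have hFIco : ∀ x, a ≤ x → x < b → a ≤ F x ∧ F x < b := by
    intro x hax hxb
    refine ⟨?_, hFb.mapsTo hxb⟩
    by_contra h
    push_neg at h
    obtain ⟨y, hy, hyx⟩ := hFa.surjOn h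
    have hya : y < a := hy
    have : y = x := hFb.injOn (lt_of_lt_of_le hya hab) hxb hyx
    omega
  constructor
  · intro x hx
    simp only [Set.mem_Iio] at *
    by_cases h : x < a
    · simp only [h, if_pos]
      exact lt_of_lt_of_le (hf.mapsTo h) hab
    · simp only [h, if_neg, not_false_iff]
      exact (hFIco x (by omega) hx).2
  constructor
  · intro x hx y hy hxy
    simp only [Set.mem_Iio] at hx hy
    by_cases h1 : x < a <;> by_cases h2 : y < a <;>
      simp only [h1, h2, if_pos, if_neg, not_false_iff] at hxy
    · exact hf.injOn h1 h2 hxy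
    · have := hf.mapsTo (show x ∈ Set.Iio a from h1)
      have := (hFIco y (by omega) hy).1
      simp only [Set.mem_Iio] at *; omega
    · have := hf.mapsTo (show y ∈ Set.Iio a from h2)
      have := (hFIco x (by omega) hx).1
      simp only [Set.mem_Iio] at *; omega
    · exact hFb.injOn hx hy hxy
  · intro y hy
    simp only [Set.mem_Iio] at hy
    by_cases h : y < a
    · obtain ⟨x, hx, hxy⟩ := hf.surjOn (show y ∈ Set.Iio a from h)
      exact ⟨x, lt_of_lt_of_le hx hab, by simp [Set.mem_Iio.mp hx, hxy]⟩
    · obtain ⟨x, hx, hxy⟩ := hFb.surjOn (show y ∈ Set.Iio b from hy)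
      have hxa : ¬ x < a := by
        intro hxa
        have := hFa.mapsTo (show x ∈ Set.Iio a from hxa)
        simp only [Set.mem_Iio] at this
        omega
      exact ⟨x, hx, by simp [hxa, hxy]⟩

/-- For every `p ∈ ℚ(𝔖)` and every `n` there is `q ≥ p` with `max(a^q) > n`,
`α^q = α^p` and `𝔅^q = 𝔅^p`. -/
theorem exists_extension_top_gt (W : Set Ordinal) (S : Tower W) (p : QCond S) (n : ℕ) :
    ∃ q : QCond S, QCond.le p q ∧ n < q.top ∧ q.α = p.α ∧ q.Alg = p.Alg := by
  classical
  obtain ⟨m, hmA, hmgt⟩ := (S.A_inf p.α p.α_mem).exists_gt (max n p.top)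
  have hmn : n < m := lt_of_le_of_lt (le_max_left _ _) hmgt
  have hmt : p.top < m := lt_of_le_of_lt (le_max_right _ _) hmgt
  have hpa_le : ∀ x ∈ p.a, x ≤ p.top := fun x hx => Finset.le_max' _ _ hx
  set F := S.F p.α with hF
  have hFt : Set.BijOn F (Set.Iio p.top) (Set.Iio p.top) :=
    S.F_seg p.α p.α_mem _ p.max_mem
  have hFm : Set.BijOn F (Set.Iio m) (Set.Iio m) := S.F_seg p.α p.α_mem _ hmA
  have hft : Set.BijOn p.f (Set.Iio p.top) (Set.Iio p.top) :=
    p.f_seg _ (p.a.max'_mem p.a_ne)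
  set qf : ℕ → ℕ := fun i => if i < p.top then p.f i else if i < m then F i else i
    with hqf
  have hane : (insert m p.a).Nonempty := ⟨m, Finset.mem_insert_self m p.a⟩
  have hmax : (insert m p.a).max' hane = m := by
    refine le_antisymm (Finset.max'_le _ _ _ ?_) (Finset.le_max' _ _ (Finset.mem_insert_self m p.a))
    intro y hy
    rcases Finset.mem_insert.mp hy with rfl | hy
    · exact le_rfl
    · exact le_of_lt (lt_of_le_of_lt (hpa_le y hy) hmt)
  have hglue : Set.BijOn qf (Set.Iio m) (Set.Iio m) := by
    refine (bijOn_glue (le_of_lt hmt) hft hFt hFm).congr ?_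
    intro x hx
    simp only [Set.mem_Iio] at hx
    simp only [hqf]
    by_cases h : x < p.top <;> simp [h, hx]
  refine ⟨⟨insert m p.a, qf, p.α, p.Alg, hane, ?_, ?_, p.α_mem, ?_, p.Alg_fin⟩,
    ⟨?_, ?_, ?_, ?_, ?_, ?_, ?_⟩, ?_, rfl, rfl⟩
  · -- f_seg
    intro k hk
    rcases Finset.mem_insert.mp hk with rfl | hk
    · exact hglue
    · have hkt : k ≤ p.top := hpa_le k hk
      refine (p.f_seg k hk).congr ?_
      intro x hx
      simp only [Set.mem_Iio] at hx
      simp [hqf, show x < p.top by omega]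
  · -- f_pad
    intro i hi
    rw [hmax] at hi
    simp [hqf, show ¬ i < p.top by omega, show ¬ i < m by omega]
  · -- max_mem
    show (insert m p.a).max' hane ∈ S.A p.α
    rw [hmax]; exact hmA
  · exact Finset.subset_insert _ _
  · -- filter
    ext x
    simp only [Finset.mem_filter, Finset.mem_insert]
    constructor
    · rintro ⟨rfl | hx, hle⟩
      · omega
      · exact hx
    · intro hx
      exact ⟨Or.inr hx, hpa_le x hx⟩
  · -- f agrees below top
    intro i hi
    simp [hqf, hi]
  · exact subset_rfl
  · exact le_rfl
  · -- subset of A p.α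
    rintro x (⟨hx, -⟩ | ⟨hx, hx'⟩)
    · exact hx
    · simp only [Finset.coe_insert, Set.mem_insert_iff, Finset.mem_coe] at hx
      rcases hx with rfl | hx
      · exact hmA
      · exact absurd hx hx'
  · -- condition on B
    intro B hB
    constructor
    · intro m' hm' n' hn' htm' hmn'
      have hn'm : n' = m := by
        rcases Finset.mem_insert.mp hn' with rfl | hn'
        · rfl
        · have := hpa_le n' hn'; omega
      have hm'lt : m' < m := by omega
      apply Set.image_congr
      rintro x ⟨-, hx1, hx2⟩
      simp only [hqf]
      rw [if_neg (by omega), if_pos (by omega)]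
    · intro m' _ n' _ _ _
      rfl
  · -- n < q.top
    show n < (insert m p.a).max' hane
    exact lt_of_lt_of_le hmn (Finset.le_max' _ _ (Finset.mem_insert_self m p.a))
end

section
/- For every tower of permutations 𝔖 = {(A_ξ, F_ξ, 𝔅_ξ)}_{ξ∈W} and every ζ ∈ W, the set {p ∈ ℚ(𝔖) : α^p ≥ ζ} is dense in ℚ(𝔖). -/
/-!
Given `p` with `α^p < ζ`, the tower axioms say that `A_ζ \ A_{α^p}` and the sets
`F_ζ(B) Δ F_{α^p}(B)`, `B ∈ 𝔅_{α^p}`, are finite, so all of them lie below some `N`.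
Pick `t ∈ A_ζ` above `N` and `max a^p`, and extend `p` to
`(a^p ∪ {t}, f^p ∪ F_{α^p}↾[max a^p, t), ζ, 𝔅^p)`. Since `t ∈ A_{α^p}`, the new `f`
permutes `{0, …, t - 1}`, and beyond `t` the permutation `F_ζ` moves the blocks of
`𝔅_{α^p}` exactly as `F_{α^p}` does.
-/

open Set Filter

section Permutations

variable {F : ℕ → ℕ} {m n : ℕ}

lemma image_Ico_eq_of_bijOn_Iio (hF : F.Injective) (hm : BijOn F (Iio m) (Iio m))
    (hn : BijOn F (Iio n) (Iio n)) : F '' Ico m n = Ico m n := by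
  rw [show Ico m n = Iio n \ Iio m by ext; simp, image_sdiff hF, hn.image_eq,
    hm.image_eq]

lemma bijOn_Ico_of_bijOn_Iio (hF : F.Injective) (hm : BijOn F (Iio m) (Iio m))
    (hn : BijOn F (Iio n) (Iio n)) : BijOn F (Ico m n) (Ico m n) := by
  simpa only [image_Ico_eq_of_bijOn_Iio hF hm hn] using (hF.injOn (s := Ico m n)).bijOn_image

lemma image_inter_Ico_of_bijOn_Iio (hF : F.Injective) (hm : BijOn F (Iio m) (Iio m))
    (hn : BijOn F (Iio n) (Iio n)) (B : Set ℕ) :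
    F '' (B ∩ Ico m n) = F '' B ∩ Ico m n := by
  rw [image_inter hF, image_Ico_eq_of_bijOn_Iio hF hm hn]

def glue (f F : ℕ → ℕ) (m t : ℕ) (i : ℕ) : ℕ :=
  if i < m then f i else if i < t then F i else i

lemma bijOn_Iio_glue {f : ℕ → ℕ} {t : ℕ} (hf : BijOn f (Iio m) (Iio m))
    (hF : BijOn F (Ico m t) (Ico m t)) (hmt : m ≤ t) :
    BijOn (glue f F m t) (Iio t) (Iio t) := by
  have hlow : BijOn (glue f F m t) (Iio m) (Iio m) :=
    hf.congr fun i hi => (if_pos hi).symm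
  have hmid : BijOn (glue f F m t) (Ico m t) (Ico m t) :=
    hF.congr fun i hi => by simp [glue, not_lt.mpr hi.1, hi.2]
  rw [← Iio_union_Ico_eq_Iio hmt]
  refine hlow.union hmid ((injOn_union (Iio_disjoint_Ici le_rfl |>.mono_right
    Ico_subset_Ici_self)).mpr ⟨hlow.injOn, hmid.injOn, fun x hx y hy hxy => ?_⟩)
  have : glue f F m t x < m := hlow.mapsTo hx
  have : m ≤ glue f F m t y := (hmid.mapsTo hy).1
  omega

end Permutations

namespace Tower

variable {W : Set Ordinal} (S : Tower W) {ξ ζ : Ordinal}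

lemma eventually_mem_A_of_lt (hξ : ξ ∈ W) (hζ : ζ ∈ W) (h : ξ < ζ) :
    ∀ᶠ n in atTop, n ∈ S.A ζ → n ∈ S.A ξ := by
  rw [← Nat.cofinite_eq_atTop]
  exact (S.A_ae_sub ξ hξ ζ hζ h).eventually_cofinite_notMem.mono
    fun n hn hζn => not_not.mp fun hξn => hn ⟨hζn, hξn⟩

lemma eventually_mem_image_iff_of_lt (hξ : ξ ∈ W) (hζ : ζ ∈ W) (h : ξ < ζ) :
    ∀ᶠ k in atTop, ∀ B ∈ S.Alg ξ, (k ∈ S.F ζ '' B ↔ k ∈ S.F ξ '' B) := by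
  rw [eventually_all_finite (S.Alg_fin ξ hξ).1, ← Nat.cofinite_eq_atTop]
  intro B hB
  exact (S.F_ae_eq ξ hξ ζ hζ h B hB).eventually_cofinite_notMem.mono
    fun k hk => not_not.mp fun hiff => hk (by rw [mem_symmDiff]; tauto)

end Tower

namespace QCond

variable {W : Set Ordinal} {S : Tower W}

lemma top_mem (p : QCond S) : p.top ∈ p.a := p.a.max'_mem p.a_ne

lemma le_top_of_mem (p : QCond S) {n : ℕ} (hn : n ∈ p.a) : n ≤ p.top := p.a.le_max' n hn

lemma le_refl (p : QCond S) : le p p := by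
  refine ⟨subset_rfl, Finset.filter_true_of_mem fun n => p.le_top_of_mem, fun _ _ => rfl,
    subset_rfl, le_rfl, ?_, fun B _ =>
      ⟨fun m _ n hn hm hmn => absurd (p.le_top_of_mem hn) (by omega), fun _ _ _ _ _ _ => rfl⟩⟩
  rintro n (⟨hn, -⟩ | ⟨hn, hn'⟩)
  · exact hn
  · exact absurd hn hn'

lemma top_insert (p : QCond S) {t : ℕ} (ht : p.top < t) :
    (insert t p.a).max' (Finset.insert_nonempty t p.a) = t := by
  rw [Finset.max'_insert (H := p.a_ne)]
  exact max_eq_left ht.le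

def extend (p : QCond S) {ξ : Ordinal} (hξ : ξ ∈ W) {t : ℕ} (htξ : t ∈ S.A ξ)
    (htα : t ∈ S.A p.α) (ht : p.top < t) : QCond S where
  a := insert t p.a
  f := glue p.f (S.F p.α) p.top t
  α := ξ
  Alg := p.Alg
  a_ne := Finset.insert_nonempty t p.a
  f_seg m hm := by
    rcases Finset.mem_insert.mp hm with rfl | hm
    · exact bijOn_Iio_glue (p.f_seg _ p.top_mem) (bijOn_Ico_of_bijOn_Iio
        (S.F_bij p.α p.α_mem).injective (S.F_seg _ p.α_mem _ p.max_mem)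
        (S.F_seg _ p.α_mem _ htα)) ht.le
    · exact (p.f_seg m hm).congr fun i hi =>
        (if_pos (lt_of_lt_of_le hi (p.le_top_of_mem hm))).symm
  f_pad i hi := by
    rw [p.top_insert ht] at hi
    simp [glue, not_lt.mpr hi, not_lt.mpr (ht.le.trans hi)]
  α_mem := hξ
  max_mem := by rw [p.top_insert ht]; exact htξ
  Alg_fin := p.Alg_fin

section Extend

variable (p : QCond S) {ξ : Ordinal} (hξ : ξ ∈ W) {t : ℕ} (htξ : t ∈ S.A ξ)
  (htα : t ∈ S.A p.α) (ht : p.top < t)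

lemma top_extend : (p.extend hξ htξ htα ht).top = t := p.top_insert ht

lemma le_extend (hαξ : p.α ≤ ξ) (hA : ∀ n ∈ S.A ξ, t ≤ n → n ∈ S.A p.α)
    (hF : ∀ B ∈ S.Alg p.α, ∀ k, t ≤ k → (k ∈ S.F ξ '' B ↔ k ∈ S.F p.α '' B)) :
    le p (p.extend hξ htξ htα ht) := by
  have htop := p.top_extend hξ htξ htα ht
  refine ⟨Finset.subset_insert _ _, ?_, fun i hi => if_pos hi, subset_rfl, hαξ, ?_,
    fun B hB => ⟨?_, ?_⟩⟩
  · rw [extend, Finset.filter_insert, if_neg (by omega), Finset.filter_true_of_mem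
      fun n => p.le_top_of_mem]
  · rintro n (⟨hn, htn⟩ | ⟨hn, hn'⟩)
    · exact hA n hn (htop ▸ htn)
    · obtain rfl | hn := Finset.mem_insert.mp (Finset.mem_coe.mp hn)
      · exact htα
      · exact absurd hn hn'
  · intro m hm n hn hpm hmn
    have hnt : n = t := by
      obtain rfl | hn := Finset.mem_insert.mp hn
      · rfl
      · exact absurd (p.le_top_of_mem hn) (by omega)
    have hmt : m = p.top := by
      obtain rfl | hm := Finset.mem_insert.mp hm
      · omega
      · exact le_antisymm (p.le_top_of_mem hm) hpm
    subst hnt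
    rw [hmt]
    exact image_congr fun i hi => by simp [extend, glue, not_lt.mpr hi.2.1, hi.2.2]
  · intro m hm n hn htm hmn
    change S.F ξ '' _ = _
    rw [htop] at htm
    have hFξ := (S.F_bij ξ hξ).injective
    have hFα := (S.F_bij p.α p.α_mem).injective
    rw [image_inter_Ico_of_bijOn_Iio hFξ (S.F_seg ξ hξ m hm) (S.F_seg ξ hξ n hn),
      image_inter_Ico_of_bijOn_Iio hFα (S.F_seg _ p.α_mem m (hA m hm htm))
        (S.F_seg _ p.α_mem n (hA n hn (by omega)))]
    ext k
    simp only [mem_inter_iff, mem_Ico, and_congr_left_iff]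
    exact fun hk => hF B hB.2 k (htm.trans hk.1)

end Extend

end QCond

/-- For every `ζ ∈ W`, the set `{p ∈ ℚ(𝔖) : α^p ≥ ζ}` is dense in `ℚ(𝔖)`. -/
theorem dense_alpha_ge (W : Set Ordinal) (S : Tower W) (ζ : Ordinal) (hζ : ζ ∈ W) :
    QCond.IsDense {p : QCond S | ζ ≤ p.α} := by
  intro p
  rcases le_or_gt ζ p.α with hle | hlt
  · exact ⟨p, hle, p.le_refl⟩
  obtain ⟨N, hN⟩ := eventually_atTop.mp <|
    (S.eventually_mem_A_of_lt p.α_mem hζ hlt).and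
      (S.eventually_mem_image_iff_of_lt p.α_mem hζ hlt)
  obtain ⟨t, htζ, ht⟩ := (S.A_inf ζ hζ).exists_gt (max N p.top)
  have hA : ∀ n ∈ S.A ζ, t ≤ n → n ∈ S.A p.α := fun n hn htn => (hN n (by omega)).1 hn
  exact ⟨p.extend hζ htζ (hA t htζ le_rfl) (by omega), le_refl ζ,
    p.le_extend hζ htζ _ _ hlt.le hA fun B hB k hk => (hN k (by omega)).2 B hB⟩
end

section
/- For every tower of permutations 𝔖 = {(A_ξ, F_ξ, 𝔅_ξ)}_{ξ∈W}, every p ∈ ℚ(𝔖), and every ζ ∈ W with ζ > α^p, there exists q ∈ ℚ(𝔖) with p ≤ q and α^q = ζ. -/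
lemma bijOn_Ico_of_bijOn {F : ℕ → ℕ} (hinj : Function.Injective F) {m n : ℕ}
    (hm : Set.BijOn F (Set.Iio m) (Set.Iio m)) (hn : Set.BijOn F (Set.Iio n) (Set.Iio n)) :
    Set.BijOn F (Set.Ico m n) (Set.Ico m n) := by
  refine ⟨?_, hinj.injOn, ?_⟩
  · rintro x ⟨hxm, hxn⟩
    refine ⟨?_, hn.mapsTo hxn⟩
    by_contra h
    push_neg at h
    obtain ⟨y, hy, hyx⟩ := hm.surjOn h
    exact absurd ((hinj hyx) ▸ hy) (not_lt.2 hxm)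
  · rintro y ⟨hym, hyn⟩
    obtain ⟨x, hx, hxy⟩ := hn.surjOn hyn
    refine ⟨x, ⟨?_, hx⟩, hxy⟩
    by_contra h
    push_neg at h
    exact absurd (hxy ▸ hm.mapsTo h) (not_lt.2 hym)

lemma image_inter_seg {F : ℕ → ℕ} (hinj : Function.Injective F) {s : Set ℕ}
    (hs : Set.BijOn F s s) (B : Set ℕ) : F '' (B ∩ s) = (F '' B) ∩ s := by
  ext y
  constructor
  · rintro ⟨x, ⟨hxB, hxs⟩, rfl⟩
    exact ⟨⟨x, hxB, rfl⟩, hs.mapsTo hxs⟩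
  · rintro ⟨⟨b, hb, rfl⟩, hys⟩
    obtain ⟨x, hx, hxy⟩ := hs.surjOn hys
    exact ⟨b, ⟨hb, (hinj hxy) ▸ hx⟩, rfl⟩

/-- For every `p ∈ ℚ(𝔖)` and every `ζ ∈ W` with `ζ > α^p` there is `q ≥ p` with
`α^q = ζ`. -/
theorem exists_extension_alpha_eq (W : Set Ordinal) (S : Tower W) (p : QCond S)
    (ζ : Ordinal) (hζ : ζ ∈ W) (hgt : p.α < ζ) :
    ∃ q : QCond S, QCond.le p q ∧ q.α = ζ := by
  obtain ⟨hAlgFin, -⟩ := p.Alg_fin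
  have hα := p.α_mem
  have hαinj : Function.Injective (S.F p.α) := (S.F_bij p.α hα).injective
  have hζinj : Function.Injective (S.F ζ) := (S.F_bij ζ hζ).injective
  set K : Set ℕ := (S.A ζ \ S.A p.α) ∪
      ⋃ B ∈ p.Alg ∩ S.Alg p.α, symmDiff (S.F ζ '' B) (S.F p.α '' B) with hKdef
  have hK : K.Finite := by
    refine (S.A_ae_sub p.α hα ζ hζ hgt).union ?_
    exact Set.Finite.biUnion (hAlgFin.inter_of_left _)
      (fun B hB => S.F_ae_eq p.α hα ζ hζ hgt B hB.2)
  obtain ⟨M, hM⟩ := hK.bddAbove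
  obtain ⟨N, hNA, hNgt⟩ := (S.A_inf ζ hζ).exists_gt (max p.top M)
  have hNtop : p.top < N := lt_of_le_of_lt (le_max_left _ _) hNgt
  have hNM : M < N := lt_of_le_of_lt (le_max_right _ _) hNgt
  have hsub : ∀ k, N ≤ k → k ∈ S.A ζ → k ∈ S.A p.α := by
    intro k hk hkA
    by_contra h
    have hxK : k ∈ K := Or.inl ⟨hkA, h⟩
    have := hM hxK
    omega
  have hNα : N ∈ S.A p.α := hsub N le_rfl hNA
  have hBijt : Set.BijOn (S.F p.α) (Set.Iio p.top) (Set.Iio p.top) :=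
    S.F_seg p.α hα p.top p.max_mem
  have hBijN : Set.BijOn (S.F p.α) (Set.Iio N) (Set.Iio N) := S.F_seg p.α hα N hNα
  set qf : ℕ → ℕ := fun i => if i < p.top then p.f i else if i < N then S.F p.α i else i
    with hqfdef
  have hqf_low : ∀ i < p.top, qf i = p.f i := fun i hi => if_pos hi
  have hqf_mid : ∀ i, p.top ≤ i → i < N → qf i = S.F p.α i := by
    intro i h1 h2
    simp only [hqfdef, if_neg (not_lt.2 h1), if_pos h2]
  have hqf_hi : ∀ i, N ≤ i → qf i = i := by
    intro i hi
    have h1 : ¬ i < p.top := by omega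
    have h2 : ¬ i < N := by omega
    simp only [hqfdef, if_neg h1, if_neg h2]
  have hbij1 : Set.BijOn qf (Set.Iio p.top) (Set.Iio p.top) :=
    (p.f_seg p.top (p.a.max'_mem p.a_ne)).congr
      (fun x hx => (hqf_low x hx).symm)
  have hbij2 : Set.BijOn qf (Set.Ico p.top N) (Set.Ico p.top N) :=
    (bijOn_Ico_of_bijOn hαinj hBijt hBijN).congr
      (fun x hx => (hqf_mid x hx.1 hx.2).symm)
  have hbijN : Set.BijOn qf (Set.Iio N) (Set.Iio N) := by
    have hinj : Set.InjOn qf (Set.Iio p.top ∪ Set.Ico p.top N) := by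
      intro x hx y hy hxy
      rcases hx with hx | hx <;> rcases hy with hy | hy
      · exact hbij1.injOn hx hy hxy
      · have h1 := hbij1.mapsTo hx
        have h2 := hbij2.mapsTo hy
        rw [hxy] at h1
        exact absurd h1.out (not_lt.2 h2.1)
      · have h1 := hbij2.mapsTo hx
        have h2 := hbij1.mapsTo hy
        rw [hxy] at h1
        exact absurd h2.out (not_lt.2 h1.1)
      · exact hbij2.injOn hx hy hxy
    have := hbij1.union hbij2 hinj
    rwa [Set.Iio_union_Ico_eq_Iio hNtop.le] at this
  have hf_seg : ∀ m ∈ insert N p.a, Set.BijOn qf (Set.Iio m) (Set.Iio m) := by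
    intro m hm
    rcases Finset.mem_insert.1 hm with rfl | hm
    · exact hbijN
    · exact (p.f_seg m hm).congr (fun x hx =>
        (hqf_low x (lt_of_lt_of_le hx.out (p.a.le_max' m hm))).symm)
  have ha_ne : (insert N p.a).Nonempty := ⟨N, Finset.mem_insert_self _ _⟩
  have htop : (insert N p.a).max' ha_ne = N := by
    apply le_antisymm
    · apply Finset.max'_le
      intro y hy
      rcases Finset.mem_insert.1 hy with rfl | hy
      · exact le_rfl
      · exact le_of_lt (lt_of_le_of_lt (p.a.le_max' y hy) hNtop)
    · exact Finset.le_max' _ _ (Finset.mem_insert_self _ _)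
  refine ⟨⟨insert N p.a, qf, ζ, p.Alg, ha_ne, hf_seg, ?_, hζ, ?_, p.Alg_fin⟩, ?_, rfl⟩
  · intro i hi
    rw [htop] at hi
    exact hqf_hi i hi
  · rw [htop]; exact hNA
  set q : QCond S := ⟨insert N p.a, qf, ζ, p.Alg, ha_ne, hf_seg, _, hζ, _, p.Alg_fin⟩
    with hqdef
  have hqtop : q.top = N := htop
  show QCond.le p q
  unfold QCond.le
  refine ⟨Finset.subset_insert _ _, ?_, ?_, subset_rfl, hgt.le, ?_, ?_⟩
  · ext n
    simp only [Finset.mem_filter, Finset.mem_insert, hqdef]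
    constructor
    · rintro ⟨rfl | hn, hle⟩
      · exact absurd hle (not_le.2 hNtop)
      · exact hn
    · exact fun hn => ⟨Or.inr hn, p.a.le_max' n hn⟩
  · exact fun i hi => hqf_low i hi
  · rintro n (⟨hnA, hn⟩ | ⟨hn, hnp⟩)
    · exact hsub n (hqtop ▸ hn) hnA
    · have : n = N ∨ n ∈ p.a := Finset.mem_insert.1 hn
      rcases this with rfl | h
      · exact hNα
      · exact absurd h hnp
  · intro B hB
    have hnosym : ∀ x, N ≤ x → x ∉ symmDiff (S.F ζ '' B) (S.F p.α '' B) := by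
      intro x hx hxs
      have hxK : x ∈ K := Or.inr (Set.mem_biUnion hB hxs)
      have := hM hxK
      omega
    constructor
    · intro m hm n hn hmt hmn
      have hnN : n = N := by
        rcases Finset.mem_insert.1 hn with rfl | h
        · rfl
        · have h1 : n ≤ p.top := p.a.le_max' n h
          rcases Finset.mem_insert.1 hm with rfl | h'
          · omega
          · have h2 : m ≤ p.top := p.a.le_max' m h'
            omega
      subst hnN
      have hmtop : m = p.top := by
        rcases Finset.mem_insert.1 hm with rfl | h'
        · omega
        · have h2 : m ≤ p.top := p.a.le_max' m h'
          omega
      subst hmtop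
      exact Set.image_congr (fun x hx => hqf_mid x hx.2.1 hx.2.2)
    · intro m hm n hn hmt hmn
      rw [hqtop] at hmt
      have hm' : m ∈ S.A p.α := hsub m hmt hm
      have hn' : n ∈ S.A p.α := hsub n (by omega) hn
      have bζ := bijOn_Ico_of_bijOn hζinj (S.F_seg ζ hζ m hm) (S.F_seg ζ hζ n hn)
      have bα := bijOn_Ico_of_bijOn hαinj (S.F_seg p.α hα m hm') (S.F_seg p.α hα n hn')
      rw [image_inter_seg hζinj bζ, image_inter_seg hαinj bα]
      ext x
      simp only [Set.mem_inter_iff]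
      constructor
      · rintro ⟨h1, h2⟩
        refine ⟨?_, h2⟩
        by_contra h
        exact hnosym x (le_trans hmt h2.1) (Set.mem_symmDiff.2 (Or.inl ⟨h1, h⟩))
      · rintro ⟨h1, h2⟩
        refine ⟨?_, h2⟩
        by_contra h
        exact hnosym x (le_trans hmt h2.1) (Set.mem_symmDiff.2 (Or.inr ⟨h1, h⟩))
end

section
/- For every tower of permutations 𝔖 = {(A_ξ, F_ξ, 𝔅_ξ)}_{ξ∈W} and every set B ∈ ⋃_{ξ∈W} 𝔅_ξ, the set {p ∈ ℚ(𝔖) : B ∈ 𝔅^p} is dense in ℚ(𝔖). -/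
lemma exists_finiteSubalgebra_superset (E : Set (Set ℕ)) (hE : E.Finite) :
    ∃ 𝔅, IsFiniteSubalgebra 𝔅 ∧ E ⊆ 𝔅 := by
  classical
  haveI : Finite E := hE
  set χ : ℕ → (E → Prop) := fun n C => n ∈ (C : Set ℕ) with hχ
  refine ⟨Set.range (fun S : Set (E → Prop) => χ ⁻¹' S), ⟨Set.finite_range _,
      ⟨∅, by simp⟩, ⟨Set.univ, by simp⟩, ?_, ?_⟩, ?_⟩
  · rintro X ⟨T, rfl⟩; exact ⟨Tᶜ, by simp⟩
  · rintro X ⟨T, rfl⟩ Y ⟨U, rfl⟩; exact ⟨T ∪ U, by simp⟩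
  · intro C hC
    refine ⟨{g | g ⟨C, hC⟩}, ?_⟩
    ext n; simp [hχ]

/-- For every `B ∈ ⋃_{ξ ∈ W} 𝔅_ξ`, the set `{p ∈ ℚ(𝔖) : B ∈ 𝔅^p}` is dense in
`ℚ(𝔖)`. -/
theorem dense_mem_alg (W : Set Ordinal) (S : Tower W) (B : Set ℕ)
    (hB : ∃ ξ ∈ W, B ∈ S.Alg ξ) :
    QCond.IsDense {p : QCond S | B ∈ p.Alg} := by
  intro p
  obtain ⟨𝔅, h𝔅, hsub⟩ :=
    exists_finiteSubalgebra_superset (insert B p.Alg) (p.Alg_fin.1.insert B)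
  refine ⟨⟨p.a, p.f, p.α, 𝔅, p.a_ne, p.f_seg, p.f_pad, p.α_mem, p.max_mem, h𝔅⟩,
    hsub (Set.mem_insert _ _), subset_rfl, ?_, fun i _ => rfl,
    fun X hX => hsub (Set.mem_insert_of_mem _ hX), le_rfl, ?_, ?_⟩
  · apply Finset.filter_true_of_mem
    intro n hn
    exact Finset.le_max' _ _ hn
  · rintro n (⟨hn, -⟩ | ⟨hn, hn'⟩)
    · exact hn
    · exact absurd hn hn'
  · intro B' _
    constructor
    · intro m hm n hn htm hmn
      exact absurd (lt_of_lt_of_le hmn (Finset.le_max' _ _ hn)) (not_lt.2 htm)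
    · intro m _ n _ _ _
      rfl
end

section
/- Let 𝔖 = {(A_ξ, F_ξ, 𝔅_ξ)}_{ξ∈W} be a tower of permutations and let ξ < ζ both belong to W. Then there exists n ∈ ℕ such that {m ∈ A_ζ : m ≥ n} ⊆ A_ξ and, for all i, j ∈ A_ζ with n ≤ i < j and all B ∈ 𝔅_ξ, F_ζ(B ∩ [i,j)) = F_ξ(B ∩ [i,j)). -/
lemma img_ico_aux {F : ℕ → ℕ} (hinj : Function.Injective F) {i j : ℕ}
    (hi : Set.BijOn F (Set.Iio i) (Set.Iio i)) (hj : Set.BijOn F (Set.Iio j) (Set.Iio j))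
    (B : Set ℕ) : F '' (B ∩ Set.Ico i j) = F '' B ∩ Set.Ico i j := by
  ext y
  constructor
  · rintro ⟨x, ⟨hxB, hxi, hxj⟩, rfl⟩
    refine ⟨⟨x, hxB, rfl⟩, ?_, hj.mapsTo hxj⟩
    by_contra h
    push_neg at h
    obtain ⟨x', hx', hx'e⟩ := hi.surjOn h
    rw [hinj hx'e] at hx'
    simp only [Set.mem_Iio] at hx'
    omega
  · rintro ⟨⟨x, hxB, rfl⟩, hyi, hyj⟩
    have hxj : x < j := by
      obtain ⟨x', hx', hx'e⟩ := hj.surjOn hyj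
      rwa [hinj hx'e] at hx'
    have hxi : i ≤ x := by
      by_contra h
      push_neg at h
      have := hi.mapsTo h
      simp only [Set.mem_Iio] at this
      omega
    exact ⟨x, ⟨hxB, hxi, hxj⟩, rfl⟩

/-- If `ξ < ζ` both belong to `W` then there is `n ∈ ℕ` such that
`{m ∈ A_ζ : m ≥ n} ⊆ A_ξ` and, for all `i, j ∈ A_ζ` with `n ≤ i < j` and all
`B ∈ 𝔅_ξ`, `F_ζ(B ∩ [i,j)) = F_ξ(B ∩ [i,j))`. -/
theorem tower_eventually_agree (W : Set Ordinal) (S : Tower W) (ξ ζ : Ordinal)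
    (hξ : ξ ∈ W) (hζ : ζ ∈ W) (hlt : ξ < ζ) :
    ∃ n : ℕ, {m : ℕ | m ∈ S.A ζ ∧ n ≤ m} ⊆ S.A ξ ∧
      ∀ i ∈ S.A ζ, ∀ j ∈ S.A ζ, n ≤ i → i < j → ∀ B ∈ S.Alg ξ,
        S.F ζ '' (B ∩ Set.Ico i j) = S.F ξ '' (B ∩ Set.Ico i j) := by
  have hfin1 : (S.A ζ \ S.A ξ).Finite := S.A_ae_sub ξ hξ ζ hζ hlt
  have hfin2 : (⋃ B ∈ S.Alg ξ, symmDiff (S.F ζ '' B) (S.F ξ '' B)).Finite :=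
    Set.Finite.biUnion (S.Alg_fin ξ hξ).1 (fun B hB => S.F_ae_eq ξ hξ ζ hζ hlt B hB)
  obtain ⟨n, hn⟩ := (hfin1.union hfin2).bddAbove
  have hsub : {m : ℕ | m ∈ S.A ζ ∧ n + 1 ≤ m} ⊆ S.A ξ := by
    rintro m ⟨hmζ, hm⟩
    by_contra hmξ
    have : m ≤ n := hn (Set.mem_union_left _ ⟨hmζ, hmξ⟩)
    omega
  refine ⟨n + 1, hsub, ?_⟩
  intro i hi j hj hni hij B hB
  have hiξ : i ∈ S.A ξ := hsub ⟨hi, hni⟩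
  have hjξ : j ∈ S.A ξ := hsub ⟨hj, by omega⟩
  have key : ∀ y, i ≤ y → (y ∈ S.F ζ '' B ↔ y ∈ S.F ξ '' B) := by
    intro y hy
    have hyD : y ∉ symmDiff (S.F ζ '' B) (S.F ξ '' B) := by
      intro hmem
      have : y ≤ n := hn (Set.mem_union_right _ (Set.mem_biUnion hB hmem))
      omega
    rw [Set.mem_symmDiff] at hyD
    push_neg at hyD
    constructor
    · intro h
      by_contra h2
      exact h2 (hyD.1 h)
    · intro h
      by_contra h2
      exact h2 (hyD.2 h)
  rw [img_ico_aux (S.F_bij ζ hζ).1 (S.F_seg ζ hζ i hi) (S.F_seg ζ hζ j hj),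
      img_ico_aux (S.F_bij ξ hξ).1 (S.F_seg ξ hξ i hiξ) (S.F_seg ξ hξ j hjξ)]
  ext y
  simp only [Set.mem_inter_iff, Set.mem_Ico]
  constructor
  · rintro ⟨h1, h2, h3⟩; exact ⟨(key y h2).1 h1, h2, h3⟩
  · rintro ⟨h1, h2, h3⟩; exact ⟨(key y h2).2 h1, h2, h3⟩
end

section
/- Let 𝔖 = {(A_ξ, F_ξ, 𝔅_ξ)}_{ξ∈W} be a tower of permutations, let p ∈ ℚ(𝔖), and let k ∈ A_{α^p} with k > max(a^p). Then the quadruple q = (a^p ∪ {k}, f^p ∪ (F_{α^p} restricted to [max(a^p), k)), α^p, 𝔅^p) is an element of ℚ(𝔖) and p ≤ q. -/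
/-- If `p ∈ ℚ(𝔖)` and `k ∈ A_{α^p}` with `k > max(a^p)`, then
`q = (a^p ∪ {k}, f^p ∪ (F_{α^p} ↾ [max(a^p), k)), α^p, 𝔅^p)` is an element of
`ℚ(𝔖)` and `p ≤ q`. -/
theorem extend_by_one_point (W : Set Ordinal) (S : Tower W) (p : QCond S)
    (k : ℕ) (hk : k ∈ S.A p.α) (hgt : p.top < k) :
    ∃ q : QCond S, q.a = insert k p.a ∧
      (∀ i, q.f i = if i < p.top then p.f i else if i < k then S.F p.α i else i) ∧
      q.α = p.α ∧ q.Alg = p.Alg ∧ QCond.le p q := by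
  classical
  have hW := p.α_mem
  have htopmem : p.top ∈ p.a := p.a.max'_mem p.a_ne
  have hle : ∀ i ∈ p.a, i ≤ p.top := fun i hi => p.a.le_max' i hi
  set g : ℕ → ℕ :=
    fun i => if i < p.top then p.f i else if i < k then S.F p.α i else i with hg
  have hane : (insert k p.a).Nonempty := ⟨k, Finset.mem_insert_self _ _⟩
  have hmax : (insert k p.a).max' hane = k := by
    apply le_antisymm
    · apply Finset.max'_le
      intro y hy
      rcases Finset.mem_insert.1 hy with rfl | hy
      · exact le_rfl
      · exact le_of_lt (lt_of_le_of_lt (hle y hy) hgt)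
    · exact Finset.le_max' _ _ (Finset.mem_insert_self _ _)
  have bijtop := S.F_seg p.α hW p.top p.max_mem
  have bijk := S.F_seg p.α hW k hk
  have Finj : Function.Injective (S.F p.α) := (S.F_bij p.α hW).1
  have hFtop : S.F p.α '' Set.Iio p.top = Set.Iio p.top := bijtop.image_eq
  have bijmid : Set.BijOn (S.F p.α) (Set.Ico p.top k) (Set.Ico p.top k) := by
    refine ⟨?_, Finj.injOn, ?_⟩
    · intro x hx
      refine ⟨?_, bijk.mapsTo hx.2⟩
      by_contra h
      push_neg at h
      have h2 : S.F p.α x ∈ Set.Iio p.top := h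
      rw [← hFtop] at h2
      obtain ⟨x', hx', hxe⟩ := h2
      exact absurd hx.1 (not_le.2 (Finj hxe ▸ hx'))
    · intro y hy
      obtain ⟨x, hx, hxe⟩ := bijk.surjOn hy.2
      refine ⟨x, ⟨?_, hx⟩, hxe⟩
      by_contra h
      push_neg at h
      have : S.F p.α x ∈ Set.Iio p.top := hFtop ▸ Set.mem_image_of_mem _ h
      rw [hxe] at this
      exact absurd hy.1 (not_le.2 this)
  have bijg1 : Set.BijOn g (Set.Iio p.top) (Set.Iio p.top) :=
    (p.f_seg p.top htopmem).congr (fun i hi => (if_pos hi).symm)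
  have bijg2 : Set.BijOn g (Set.Ico p.top k) (Set.Ico p.top k) :=
    bijmid.congr (fun i hi => by
      simp only [hg]
      rw [if_neg (not_lt.2 hi.1), if_pos hi.2])
  have bijgk : Set.BijOn g (Set.Iio k) (Set.Iio k) := by
    have hunion : Set.Iio p.top ∪ Set.Ico p.top k = Set.Iio k :=
      Set.Iio_union_Ico_eq_Iio (le_of_lt hgt)
    have hinj : Set.InjOn g (Set.Iio p.top ∪ Set.Ico p.top k) := by
      intro x hx y hy hxy
      rcases hx with hx | hx <;> rcases hy with hy | hy
      · exact bijg1.injOn hx hy hxy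
      · exact absurd (hxy ▸ bijg1.mapsTo hx) (not_lt.2 (bijg2.mapsTo hy).1)
      · exact absurd (hxy ▸ bijg2.mapsTo hx).1 (not_le.2 (bijg1.mapsTo hy))
      · exact bijg2.injOn hx hy hxy
    have := (bijg1.union bijg2 hinj)
    rwa [hunion] at this
  refine ⟨⟨insert k p.a, g, p.α, p.Alg, hane, ?_, ?_, hW, ?_, p.Alg_fin⟩,
    rfl, fun i => rfl, rfl, rfl, ?_⟩
  · intro m hm
    rcases Finset.mem_insert.1 hm with rfl | hm
    · exact bijgk
    · exact (p.f_seg m hm).congr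
        (fun i hi => (if_pos (lt_of_lt_of_le hi (hle m hm))).symm)
  · intro i hi
    rw [hmax] at hi
    simp only [hg]
    rw [if_neg (not_lt.2 (le_trans (le_of_lt hgt) hi)), if_neg (not_lt.2 hi)]
  · rw [hmax]; exact hk
  · refine ⟨Finset.subset_insert _ _, ?_, ?_, le_rfl, le_rfl, ?_, ?_⟩
    · ext n
      simp only [Finset.mem_filter, Finset.mem_insert]
      constructor
      · rintro ⟨rfl | hn, hn2⟩
        · exact absurd hn2 (not_le.2 hgt)
        · exact hn
      · exact fun hn => ⟨Or.inr hn, hle n hn⟩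
    · intro i hi
      exact if_pos hi
    · rintro n (⟨hn1, hn2⟩ | hn)
      · exact hn1
      · have : n = k := by
          rcases Finset.mem_insert.1 hn.1 with rfl | h
          · rfl
          · exact absurd h hn.2
        exact this ▸ hk
    · intro B hB
      refine ⟨?_, fun m _ n _ _ _ => rfl⟩
      intro m hm n hn hm2 hmn
      have hnk : n = k := by
        rcases Finset.mem_insert.1 hn with rfl | h
        · rfl
        · exact absurd (lt_of_le_of_lt hm2 hmn) (not_lt.2 (hle n h))
      apply Set.image_congr
      rintro x ⟨-, hx1, hx2⟩
      simp only [hg]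
      rw [if_neg (not_lt.2 (le_trans hm2 hx1)), if_pos (hnk ▸ hx2)]
end

section
/- Let 𝔖 = {(A_ξ, F_ξ, 𝔅_ξ)}_{ξ∈W} be a tower of permutations and let P be a finite set of conditions in ℚ(𝔖) all of which have the same first coordinate a, the same second coordinate f, and the same third coordinate α. Then P has a common upper bound in ℚ(𝔖); in particular any two conditions in ℚ(𝔖) with the same a, f and α are compatible. -/
/-- The Boolean subalgebra of `𝒫(ℕ)` generated by a family `G`: the sets which are
unions of `G`-equivalence classes. -/
def genAlg (G : Set (Set ℕ)) : Set (Set ℕ) :=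
  {X | ∀ n m : ℕ, (∀ B ∈ G, (n ∈ B ↔ m ∈ B)) → (n ∈ X ↔ m ∈ X)}

lemma subset_genAlg (G : Set (Set ℕ)) : G ⊆ genAlg G :=
  fun B hB n m h => h B hB

lemma genAlg_finite (G : Set (Set ℕ)) (hG : G.Finite) : (genAlg G).Finite := by
  have : Finite ↥G := hG
  classical
  set t : ℕ → (↥G → Prop) := fun n B => n ∈ (B : Set ℕ) with ht
  apply Set.Finite.of_finite_image (f := fun X => t '' X)
  · exact Set.toFinite _
  · intro X hX Y hY hXY
    have key : ∀ Z ∈ genAlg G, ∀ Z' ∈ genAlg G, t '' Z ⊆ t '' Z' → Z ⊆ Z' := by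
      intro Z hZ Z' hZ' hsub n hn
      obtain ⟨m, hm, hmn⟩ := hsub ⟨n, hn, rfl⟩
      refine (hZ' n m ?_).mpr hm
      intro B hB
      have := congrFun hmn ⟨B, hB⟩
      simp only [t] at this
      exact ⟨fun h => this ▸ h, fun h => this.symm ▸ h⟩
    exact Set.Subset.antisymm (key X hX Y hY hXY.le) (key Y hY X hX hXY.ge)

lemma genAlg_isFiniteSubalgebra (G : Set (Set ℕ)) (hG : G.Finite) :
    IsFiniteSubalgebra (genAlg G) := by
  refine ⟨genAlg_finite G hG, ?_, ?_, ?_, ?_⟩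
  · intro n m _; simp
  · intro n m _; simp
  · intro X hX n m h
    have := hX n m h
    simp only [Set.mem_compl_iff]
    tauto
  · intro X hX Y hY n m h
    have h1 := hX n m h
    have h2 := hY n m h
    simp only [Set.mem_union]
    tauto

lemma same_stem_aux (W : Set Ordinal) (S : Tower W)
    (P : Set (QCond S)) (hfin : P.Finite) (hne : P.Nonempty)
    (hsame : ∀ p ∈ P, ∀ q ∈ P, p.a = q.a ∧ p.f = q.f ∧ p.α = q.α) :
    ∃ r : QCond S, ∀ p ∈ P, QCond.le p r := by
  classical
  obtain ⟨p₀, hp₀⟩ := hne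
  set G : Set (Set ℕ) := ⋃ p ∈ P, p.Alg with hGdef
  have hGfin : G.Finite := hfin.biUnion (fun p _ => p.Alg_fin.1)
  refine ⟨⟨p₀.a, p₀.f, p₀.α, genAlg G, p₀.a_ne, p₀.f_seg, p₀.f_pad, p₀.α_mem,
    p₀.max_mem, genAlg_isFiniteSubalgebra G hGfin⟩, ?_⟩
  intro p hp
  obtain ⟨hpa, hpf, hpα⟩ := hsame p hp p₀ hp₀
  have htop : p.top = p₀.a.max' p₀.a_ne := by
    simp only [QCond.top]
    congr 1
  refine ⟨?_, ?_, ?_, ?_, ?_, ?_, ?_⟩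
  · exact hpa ▸ subset_rfl
  · show p₀.a.filter (fun n => n ≤ p.top) = p.a
    rw [htop, hpa]
    exact Finset.filter_true_of_mem (fun n hn => Finset.le_max' _ n hn)
  · intro i _; rw [hpf]
  · intro B hB
    exact subset_genAlg G (Set.mem_biUnion hp hB)
  · exact le_of_eq hpα
  · intro n hn
    rcases hn with hn | hn
    · exact hpα ▸ hn.1
    · rw [hpa] at hn
      exact absurd hn.2 (not_not.mpr hn.1)
  · intro B _
    constructor
    · intro m _ n hn h1 h2
      exfalso
      have : n ≤ p.top := htop ▸ Finset.le_max' _ n hn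
      omega
    · intro m _ n _ _ _
      rw [hpα]

/-- Any finite (nonempty) set of conditions in `ℚ(𝔖)` sharing the same first
coordinate `a`, second coordinate `f` and third coordinate `α` has a common
upper bound; in particular any two conditions with the same `a`, `f` and `α`
are compatible. -/
theorem same_stem_upperBound (W : Set Ordinal) (S : Tower W)
    (P : Set (QCond S)) (hfin : P.Finite) (hne : P.Nonempty)
    (hsame : ∀ p ∈ P, ∀ q ∈ P, p.a = q.a ∧ p.f = q.f ∧ p.α = q.α) :
    (∃ r : QCond S, ∀ p ∈ P, QCond.le p r) ∧
    ∀ p q : QCond S, p.a = q.a → p.f = q.f → p.α = q.α → QCond.Compatible p q := by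
  refine ⟨same_stem_aux W S P hfin hne hsame, ?_⟩
  intro p q h1 h2 h3
  have hsame' : ∀ x ∈ ({p, q} : Set (QCond S)), ∀ y ∈ ({p, q} : Set (QCond S)),
      x.a = y.a ∧ x.f = y.f ∧ x.α = y.α := by
    rintro x (rfl | rfl) y (rfl | rfl) <;>
      simp_all <;> exact ⟨h1.symm, h2.symm, h3.symm⟩
  obtain ⟨r, hr⟩ := same_stem_aux W S {p, q} ((Set.finite_singleton q).insert p)
    ⟨p, Or.inl rfl⟩ hsame'
  exact ⟨r, hr p (Or.inl rfl), hr q (Or.inr rfl)⟩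
end

section
/- Let 𝔖 = {(A_ξ, F_ξ, 𝔅_ξ)}_{ξ∈W} be a tower of permutations and let G ⊆ ℚ(𝔖) be directed (any two elements of G have a common upper bound in G) and such that for every n ∈ ℕ there is p ∈ G with max(a^p) > n. Set A_G = ⋃_{p∈G} a^p and F_G = ⋃_{p∈G} f^p. Then: F_G is a well-defined permutation of ℕ; A_G is infinite; F_G restricted to {0,…,m−1} is a permutation of {0,…,m−1} for each m ∈ A_G; for every p ∈ G, {n ∈ A_G : n ≥ max(a^p)} ⊆ A_{α^p}; and for every p ∈ G, every B ∈ 𝔅^p ∩ 𝔅_{α^p}, and all m, n ∈ A_G with max(a^p) ≤ m < n, F_G(B ∩ [m,n)) = F_{α^p}(B ∩ [m,n)). -/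
/-- If `G ⊆ ℚ(𝔖)` is directed and `{max(a^p) : p ∈ G}` is unbounded, then
`F_G = ⋃_{p ∈ G} f^p` is a well-defined permutation of `ℕ`,
`A_G = ⋃_{p ∈ G} a^p` is infinite, `F_G` restricted to `{0,…,m−1}` is a
permutation of `{0,…,m−1}` for each `m ∈ A_G`,
`{n ∈ A_G : n ≥ max(a^p)} ⊆ A_{α^p}` for every `p ∈ G`, and
`F_G(B ∩ [m,n)) = F_{α^p}(B ∩ [m,n))` for every `p ∈ G`, every
`B ∈ 𝔅^p ∩ 𝔅_{α^p}` and all `m, n ∈ A_G` with `max(a^p) ≤ m < n`. -/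
theorem generic_union (W : Set Ordinal) (S : Tower W) (G : Set (QCond S))
    (hdir : ∀ p ∈ G, ∀ q ∈ G, ∃ r ∈ G, QCond.le p r ∧ QCond.le q r)
    (hunb : ∀ n : ℕ, ∃ p ∈ G, n < p.top) :
    ∃ FG : ℕ → ℕ,
      Function.Bijective FG ∧
      (∀ p ∈ G, ∀ i, i < p.top → FG i = p.f i) ∧
      (⋃ p ∈ G, (↑p.a : Set ℕ)).Infinite ∧
      (∀ m ∈ ⋃ p ∈ G, (↑p.a : Set ℕ), Set.BijOn FG (Set.Iio m) (Set.Iio m)) ∧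
      (∀ p ∈ G, ∀ n ∈ ⋃ q ∈ G, (↑q.a : Set ℕ), p.top ≤ n → n ∈ S.A p.α) ∧
      (∀ p ∈ G, ∀ B ∈ p.Alg ∩ S.Alg p.α,
        ∀ m ∈ ⋃ q ∈ G, (↑q.a : Set ℕ), ∀ n ∈ ⋃ q ∈ G, (↑q.a : Set ℕ),
          p.top ≤ m → m < n →
            FG '' (B ∩ Set.Ico m n) = S.F p.α '' (B ∩ Set.Ico m n)) := by
  classical
  choose pk hkG hklt using hunb
  set FG : ℕ → ℕ := fun n => (pk n).f n with hFG
  have hkey : ∀ p ∈ G, ∀ i, i < p.top → FG i = p.f i := by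
    intro p hp i hi
    obtain ⟨r, hrG, hpr, hqr⟩ := hdir p hp (pk i) (hkG i)
    have h1 := hpr.2.2.1 i hi
    have h2 := hqr.2.2.1 i (hklt i)
    simp only [hFG]
    rw [← h2, h1]
  have hbij : ∀ p ∈ G, ∀ m ∈ p.a, Set.BijOn FG (Set.Iio m) (Set.Iio m) := by
    intro p hp m hm
    refine (p.f_seg m hm).congr ?_
    intro i hi
    exact (hkey p hp i (lt_of_lt_of_le hi (Finset.le_max' p.a m hm))).symm
  have hbijtop : ∀ p ∈ G, Set.BijOn FG (Set.Iio p.top) (Set.Iio p.top) :=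
    fun p hp => hbij p hp p.top (p.a.max'_mem p.a_ne)
  refine ⟨FG, ⟨?_, ?_⟩, hkey, ?_, ?_, ?_, ?_⟩
  · intro i j hij
    obtain ⟨r, hrG, hpr, hqr⟩ := hdir (pk i) (hkG i) (pk j) (hkG j)
    have hi : i < r.top := lt_of_lt_of_le (hklt i)
      (Finset.le_max' r.a _ (hpr.1 ((pk i).a.max'_mem (pk i).a_ne)))
    have hj : j < r.top := lt_of_lt_of_le (hklt j)
      (Finset.le_max' r.a _ (hqr.1 ((pk j).a.max'_mem (pk j).a_ne)))
    exact (hbijtop r hrG).injOn hi hj hij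
  · intro j
    obtain ⟨i, hi, hfi⟩ := (hbijtop (pk j) (hkG j)).surjOn (Set.mem_Iio.2 (hklt j))
    exact ⟨i, hfi⟩
  · apply Set.infinite_of_not_bddAbove
    rintro ⟨b, hb⟩
    have : (pk b).top ∈ ⋃ p ∈ G, (↑p.a : Set ℕ) := by
      exact Set.mem_biUnion (hkG b) ((pk b).a.max'_mem (pk b).a_ne)
    exact absurd (hb this) (not_le.2 (hklt b))
  · intro m hm
    obtain ⟨p, hp, hmp⟩ := by simpa using hm
    exact hbij p hp m hmp
  · intro p hp n hn hpn
    obtain ⟨q, hq, hnq⟩ := by simpa using hn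
    obtain ⟨r, hrG, hpr, hqr⟩ := hdir p hp q hq
    by_cases hnp : n ∈ p.a
    · have : n = p.top := le_antisymm (Finset.le_max' p.a n hnp) hpn
      rw [this]; exact p.max_mem
    · exact hpr.2.2.2.2.2.1 (Or.inr ⟨hqr.1 hnq, hnp⟩)
  · intro p hp B hB m hm n hn hpm hmn
    obtain ⟨q1, hq1, hmq⟩ := by simpa using hm
    obtain ⟨q2, hq2, hnq⟩ := by simpa using hn
    obtain ⟨r1, hr1G, h11, h12⟩ := hdir q1 hq1 q2 hq2
    obtain ⟨r, hrG, hpr, h1r⟩ := hdir p hp r1 hr1G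
    have hmr : m ∈ r.a := h1r.1 (h11.1 hmq)
    have hnr : n ∈ r.a := h1r.1 (h12.1 hnq)
    have heq := (hpr.2.2.2.2.2.2 B hB).1 m hmr n hnr hpm hmn
    rw [← heq]
    apply Set.image_congr
    intro x hx
    exact hkey r hrG x (lt_of_lt_of_le hx.2.2 (Finset.le_max' r.a n hnr))
end

section
/- Let 𝔖 = {(A_ξ, F_ξ, 𝔅_ξ)}_{ξ∈W} be a tower of permutations, let A be an infinite subset of ℕ, let ψ : A → ℕ be injective, and let k ∈ ℕ. Then the set of conditions q ∈ ℚ(𝔖) for which there exists i ∈ A with k ≤ i < max(a^q) and f^q(i) ≠ ψ(i) is dense in ℚ(𝔖). -/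

private lemma bijOn_Ico_of_bijOn_Iio_s12 {F : ℕ → ℕ} (hinj : Function.Injective F) {t N : ℕ}
    (h1 : Set.BijOn F (Set.Iio t) (Set.Iio t)) (h2 : Set.BijOn F (Set.Iio N) (Set.Iio N)) :
    Set.BijOn F (Set.Ico t N) (Set.Ico t N) := by
  refine ⟨?_, hinj.injOn, ?_⟩
  · rintro x ⟨hxt, hxN⟩
    refine ⟨?_, h2.mapsTo hxN⟩
    by_contra hlt
    push_neg at hlt
    obtain ⟨x', hx', heq⟩ := h1.surjOn hlt
    exact absurd ((hinj heq) ▸ hx') (not_lt.mpr hxt)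
  · rintro y ⟨hyt, hyN⟩
    obtain ⟨x, hx, rfl⟩ := h2.surjOn hyN
    refine ⟨x, ⟨?_, hx⟩, rfl⟩
    by_contra hlt
    push_neg at hlt
    exact absurd (h1.mapsTo hlt) (not_lt.mpr hyt)

/-- If `A ⊆ ℕ` is infinite, `ψ : A → ℕ` is injective and `k ∈ ℕ`, then the set
of conditions `q ∈ ℚ(𝔖)` for which there is `i ∈ A` with
`k ≤ i < max(a^q)` and `f^q(i) ≠ ψ(i)` is dense in `ℚ(𝔖)`. -/
theorem dense_disagree (W : Set Ordinal) (S : Tower W)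
    (A : Set ℕ) (hA : A.Infinite) (ψ : ℕ → ℕ) (hψ : Set.InjOn ψ A) (k : ℕ) :
    QCond.IsDense {q : QCond S | ∃ i ∈ A, k ≤ i ∧ i < q.top ∧ q.f i ≠ ψ i} := by
  intro p
  set t := p.top with ht
  -- the finite family of relevant sets
  set 𝒞 : Set (Set ℕ) := p.Alg ∩ S.Alg p.α with h𝒞
  have h𝒞fin : 𝒞.Finite := p.Alg_fin.1.inter_of_left _
  -- pigeonhole: two elements of A above max k t with the same 𝒞-type
  have hinf : (A \ Set.Iio (max k t)).Infinite := hA.diff (Set.finite_Iio _)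
  obtain ⟨i, hi, j, hj, hij, hχ⟩ :=
    hinf.exists_ne_map_eq_of_mapsTo (f := fun x => {B | B ∈ 𝒞 ∧ x ∈ B})
      (show Set.MapsTo _ _ {s : Set (Set ℕ) | s ⊆ 𝒞} from fun x _ B hB => hB.1)
      h𝒞fin.finite_subsets
  have hsame : ∀ B ∈ 𝒞, (i ∈ B ↔ j ∈ B) := by
    intro B hB
    constructor
    · intro h
      have : B ∈ {B | B ∈ 𝒞 ∧ j ∈ B} := hχ ▸ ⟨hB, h⟩
      exact this.2
    · intro h
      have : B ∈ {B | B ∈ 𝒞 ∧ i ∈ B} := hχ.symm ▸ ⟨hB, h⟩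
      exact this.2
  have hik : k ≤ i := le_trans (le_max_left _ _) (not_lt.mp hi.2)
  have hit : t ≤ i := le_trans (le_max_right _ _) (not_lt.mp hi.2)
  have hjt : t ≤ j := le_trans (le_max_right _ _) (not_lt.mp hj.2)
  -- choose N ∈ A_{α} above i and j
  obtain ⟨N, hN, hmaxN⟩ := (S.A_inf p.α p.α_mem).exists_gt (max i j)
  have hiN : i < N := lt_of_le_of_lt (le_max_left _ _) hmaxN
  have hjN : j < N := lt_of_le_of_lt (le_max_right _ _) hmaxN
  have htN : t ≤ N := le_of_lt (lt_of_le_of_lt hit hiN)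
  -- possibly swap i and j
  set σ : ℕ ≃ ℕ := if S.F p.α i = ψ i then Equiv.swap i j else Equiv.refl ℕ with hσ
  have hσσ : ∀ x, σ (σ x) = x := by
    intro x
    by_cases h : S.F p.α i = ψ i <;> simp [hσ, h, Equiv.swap_apply_self]
  have hσcases : ∀ x, σ x = x ∨ σ x = i ∨ σ x = j := by
    intro x
    by_cases h : S.F p.α i = ψ i
    · rw [hσ, if_pos h, Equiv.swap_apply_def]
      split_ifs <;> tauto
    · rw [hσ, if_neg h]; tauto
  have hiIco : i ∈ Set.Ico t N := ⟨hit, hiN⟩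
  have hjIco : j ∈ Set.Ico t N := ⟨hjt, hjN⟩
  have hσIco : ∀ x ∈ Set.Ico t N, σ x ∈ Set.Ico t N := by
    intro x hx
    rcases hσcases x with h | h | h <;> rw [h] <;> assumption
  have hσB : ∀ B ∈ 𝒞, ∀ x, x ∈ B ↔ σ x ∈ B := by
    intro B hB x
    by_cases h : S.F p.α i = ψ i
    · rw [hσ, if_pos h, Equiv.swap_apply_def]
      split_ifs with h1 h2
      · subst h1; exact hsame B hB
      · subst h2; exact (hsame B hB).symm
      · rfl
    · rw [hσ, if_neg h]; rfl
  -- the new function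
  set g : ℕ → ℕ := fun x => if x < t then p.f x else if x < N then S.F p.α (σ x) else x
    with hg
  have hgIio : ∀ x, x < t → g x = p.f x := fun x hx => by simp [hg, hx]
  have hgIco : ∀ x, t ≤ x → x < N → g x = S.F p.α (σ x) := fun x h1 h2 => by
    simp [hg, not_lt.mpr h1, h2]
  have hgpad : ∀ x, N ≤ x → g x = x := fun x h1 => by
    simp [hg, not_lt.mpr (le_trans htN h1), not_lt.mpr h1]
  -- bijectivity facts
  have hFinj : Function.Injective (S.F p.α) := (S.F_bij p.α p.α_mem).injective
  have htmem : t ∈ p.a := p.a.max'_mem p.a_ne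
  have hFt : Set.BijOn (S.F p.α) (Set.Iio t) (Set.Iio t) := S.F_seg p.α p.α_mem t p.max_mem
  have hFN : Set.BijOn (S.F p.α) (Set.Iio N) (Set.Iio N) := S.F_seg p.α p.α_mem N hN
  have hFIco : Set.BijOn (S.F p.α) (Set.Ico t N) (Set.Ico t N) :=
    bijOn_Ico_of_bijOn_Iio_s12 hFinj hFt hFN
  have hσbij : Set.BijOn (fun x => (σ x : ℕ)) (Set.Ico t N) (Set.Ico t N) := by
    refine ⟨hσIco, σ.injective.injOn, ?_⟩
    intro y hy
    exact ⟨σ y, hσIco y hy, hσσ y⟩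
  have hgIcoBij : Set.BijOn g (Set.Ico t N) (Set.Ico t N) :=
    (hFIco.comp hσbij).congr (fun x hx => (hgIco x hx.1 hx.2).symm)
  have hgtBij : Set.BijOn g (Set.Iio t) (Set.Iio t) :=
    (p.f_seg t htmem).congr (fun x hx => (hgIio x hx).symm)
  have hgNBij : Set.BijOn g (Set.Iio N) (Set.Iio N) := by
    have hinj : Set.InjOn g (Set.Iio t ∪ Set.Ico t N) := by
      intro x hx y hy hxy
      rcases hx with hx | hx <;> rcases hy with hy | hy
      · exact hgtBij.injOn hx hy hxy
      · exact absurd (hxy ▸ hgtBij.mapsTo hx) (not_lt.mpr (hgIcoBij.mapsTo hy).1)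
      · exact absurd (hxy ▸ hgIcoBij.mapsTo hx).1 (not_le.mpr (hgtBij.mapsTo hy))
      · exact hgIcoBij.injOn hx hy hxy
    have := hgtBij.union hgIcoBij hinj
    rwa [Set.Iio_union_Ico_eq_Iio htN] at this
  -- build the new condition
  have hane : (insert N p.a).Nonempty := ⟨N, Finset.mem_insert_self N p.a⟩
  have hmax : (insert N p.a).max' hane = N := by
    apply le_antisymm
    · apply Finset.max'_le
      intro y hy
      rcases Finset.mem_insert.mp hy with h | hy
      · exact le_of_eq h
      · exact le_trans (Finset.le_max' _ _ hy) htN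
    · exact Finset.le_max' _ _ (Finset.mem_insert_self N p.a)
  have hlemax : ∀ m ∈ p.a, m ≤ t := fun m hm => Finset.le_max' _ _ hm
  refine ⟨⟨insert N p.a, g, p.α, p.Alg, hane, ?_, ?_, p.α_mem, ?_, p.Alg_fin⟩, ?_, ?_⟩
  · -- f_seg
    intro m hm
    rcases Finset.mem_insert.mp hm with rfl | hm
    · exact hgNBij
    · exact (p.f_seg m hm).congr
        (fun x hx => (hgIio x (lt_of_lt_of_le hx (hlemax m hm))).symm)
  · -- f_pad
    intro x hx
    rw [hmax] at hx
    exact hgpad x hx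
  · -- max_mem
    rw [hmax]; exact hN
  · -- membership in the dense set
    refine ⟨i, hi.1, hik, ?_, ?_⟩
    · show i < (insert N p.a).max' hane
      rw [hmax]; exact hiN
    · show g i ≠ ψ i
      rw [hgIco i hit hiN]
      by_cases h : S.F p.α i = ψ i
      · rw [hσ, if_pos h, Equiv.swap_apply_left]
        intro hcon
        exact hij (hFinj (hcon.trans h.symm)).symm
      · rw [hσ, if_neg h]
        exact h
  · -- le p q
    have htopq : (insert N p.a).max' hane = N := hmax
    refine ⟨Finset.subset_insert _ _, ?_, ?_, le_refl _, le_refl _, ?_, ?_⟩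
    · -- filter
      rw [Finset.filter_insert, if_neg (by exact not_le.mpr (lt_of_le_of_lt hit hiN)),
        Finset.filter_true_of_mem hlemax]
    · -- agreement below t
      exact fun x hx => hgIio x hx
    · -- subset of A α
      rintro n (⟨hn1, _⟩ | ⟨hn1, hn2⟩)
      · exact hn1
      · rcases Finset.mem_insert.mp hn1 with rfl | hmem
        · exact hN
        · exact absurd hmem hn2
    · -- the algebra conditions
      intro B hB
      constructor
      · intro m hm n hn hmt hmn
        -- necessarily m = t and n = N
        have hnN : n = N := by
          rcases Finset.mem_insert.mp hn with h | hn'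
          · exact h
          · exact absurd (lt_of_le_of_lt hmt hmn) (not_lt.mpr (hlemax n hn'))
        have hmtt : m = t := by
          rcases Finset.mem_insert.mp hm with h | hm'
          · exact absurd (hnN ▸ h ▸ hmn) (lt_irrefl _)
          · exact le_antisymm (hlemax m hm') hmt
        rw [hmtt, hnN]
        -- images agree
        have hσimg : (fun x => (σ x : ℕ)) '' (B ∩ Set.Ico t N) = B ∩ Set.Ico t N := by
          apply Set.Subset.antisymm
          · rintro y ⟨x, ⟨hxB, hxI⟩, rfl⟩
            exact ⟨(hσB B hB x).mp hxB, hσIco x hxI⟩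
          · rintro x ⟨hxB, hxI⟩
            refine ⟨σ x, ⟨(hσB B hB x).mp hxB, hσIco x hxI⟩, hσσ x⟩
        calc g '' (B ∩ Set.Ico t N)
            = (S.F p.α ∘ fun x => (σ x : ℕ)) '' (B ∩ Set.Ico t N) := by
              apply Set.image_congr
              rintro x ⟨_, hxI⟩
              exact hgIco x hxI.1 hxI.2
          _ = S.F p.α '' ((fun x => (σ x : ℕ)) '' (B ∩ Set.Ico t N)) := by
              rw [Set.image_comp]
          _ = S.F p.α '' (B ∩ Set.Ico t N) := by rw [hσimg]
      · intro m _ n _ _ _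
        rfl
end

section
/- Let 𝔖 = {(A_ξ, F_ξ, 𝔅_ξ)}_{ξ∈W} be a tower of permutations, let p ∈ ℚ(𝔖), let 𝔅 be a finite subalgebra of 𝒫(ℕ), and suppose there exist distinct i, j with max(a^p) ≤ i < j < m, where m ∈ A_{α^p}, such that for every B ∈ 𝔅^p one has i ∈ B if and only if j ∈ B. Then, writing F = F_{α^p}, the function f obtained from F restricted to [max(a^p), m) by exchanging the values at i and j (f(i) = F(j), f(j) = F(i), f(n) = F(n) for all other n ∈ [max(a^p), m)) satisfies f(B ∩ [max(a^p), m)) = F(B ∩ [max(a^p), m)) for every B ∈ 𝔅^p, and q = (a^p ∪ {m}, f^p ∪ f, α^p, 𝔅^p) is an element of ℚ(𝔖) with p ≤ q. -/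

lemma swap_bijOn_of_mapsTo {i j : ℕ} {T : Set ℕ}
    (hT : ∀ y ∈ T, Equiv.swap i j y ∈ T) :
    Set.BijOn (Equiv.swap i j) T T := by
  refine ⟨hT, (Equiv.injective _).injOn, fun y hy => ⟨Equiv.swap i j y, hT y hy, by simp⟩⟩

lemma bijOn_Ico_of_bijOn_Iio_s13 {f : ℕ → ℕ} {a b : ℕ} (hab : a ≤ b)
    (h1 : Set.BijOn f (Set.Iio a) (Set.Iio a))
    (h2 : Set.BijOn f (Set.Iio b) (Set.Iio b)) :
    Set.BijOn f (Set.Ico a b) (Set.Ico a b) := by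
  constructor
  · intro n hn
    refine ⟨?_, h2.mapsTo (lt_of_lt_of_le hn.2 le_rfl)⟩
    by_contra hlt
    push_neg at hlt
    obtain ⟨n', hn', hfn'⟩ := h1.surjOn hlt
    have : n' = n := h2.injOn (lt_of_lt_of_le hn' hab) hn.2 hfn'
    exact absurd (this ▸ hn') (not_lt.mpr hn.1)
  constructor
  · exact h2.injOn.mono (fun x hx => hx.2)
  · intro y hy
    obtain ⟨n, hn, hfn⟩ := h2.surjOn hy.2
    refine ⟨n, ⟨?_, hn⟩, hfn⟩
    by_contra hlt
    push_neg at hlt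
    have := h1.mapsTo hlt
    rw [hfn] at this
    exact absurd hy.1 (not_le.mpr this)

/-- If `p ∈ ℚ(𝔖)`, `𝔅` is a finite subalgebra of `𝒫(ℕ)`, and
`max(a^p) ≤ i < j < m` with `m ∈ A_{α^p}` and `i ∈ B ↔ j ∈ B` for every
`B ∈ 𝔅^p`, then the function `f` obtained from `F_{α^p} ↾ [max(a^p), m)` by
exchanging the values at `i` and `j` satisfies
`f(B ∩ [max(a^p), m)) = F_{α^p}(B ∩ [max(a^p), m))` for every `B ∈ 𝔅^p`, and
`q = (a^p ∪ {m}, f^p ∪ f, α^p, 𝔅^p)` is an element of `ℚ(𝔖)` with `p ≤ q`. -/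
theorem swap_extension (W : Set Ordinal) (S : Tower W) (p : QCond S)
    (𝔅 : Set (Set ℕ)) (h𝔅 : IsFiniteSubalgebra 𝔅)
    (i j m : ℕ) (hi : p.top ≤ i) (hij : i < j) (hjm : j < m)
    (hm : m ∈ S.A p.α) (hatom : ∀ B ∈ p.Alg, (i ∈ B ↔ j ∈ B)) :
    (∀ B ∈ p.Alg,
      (fun n => if n = i then S.F p.α j else if n = j then S.F p.α i else S.F p.α n) ''
          (B ∩ Set.Ico p.top m) =
        S.F p.α '' (B ∩ Set.Ico p.top m)) ∧
    ∃ q : QCond S, q.a = insert m p.a ∧ q.α = p.α ∧ q.Alg = p.Alg ∧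
      (∀ n, q.f n = if n < p.top then p.f n
        else if n < m then
          (if n = i then S.F p.α j else if n = j then S.F p.α i else S.F p.α n)
        else n) ∧
      QCond.le p q := by
  have htopa : p.top ∈ p.a := p.a.max'_mem p.a_ne
  have htoplt : p.top < m := lt_of_le_of_lt hi (hij.trans hjm)
  have hiIco : i ∈ Set.Ico p.top m := ⟨hi, hij.trans hjm⟩
  have hjIco : j ∈ Set.Ico p.top m := ⟨le_trans hi hij.le, hjm⟩
  set F := S.F p.α with hF
  set g' : ℕ → ℕ := fun n => if n = i then F j else if n = j then F i else F n with hg'def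
  have hne : j ≠ i := hij.ne'
  have hg' : ∀ n, g' n = F (Equiv.swap i j n) := by
    intro n
    rw [Equiv.swap_apply_def]
    split_ifs with h1 h2
    · simp [hg'def, h1, hne]
    · simp [hg'def, h1, h2, hne]
    · simp [hg'def, h1, h2]
  -- claim 1
  have hclaim : ∀ B ∈ p.Alg, g' '' (B ∩ Set.Ico p.top m) = F '' (B ∩ Set.Ico p.top m) := by
    intro B hB
    have hT : ∀ y ∈ B ∩ Set.Ico p.top m, Equiv.swap i j y ∈ B ∩ Set.Ico p.top m := by
      intro y hy
      rw [Equiv.swap_apply_def]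
      split_ifs with h1 h2
      · exact ⟨(hatom B hB).mp (h1 ▸ hy.1), hjIco⟩
      · exact ⟨(hatom B hB).mpr (h2 ▸ hy.1), hiIco⟩
      · exact hy
    have hsw : Equiv.swap i j '' (B ∩ Set.Ico p.top m) = B ∩ Set.Ico p.top m :=
      (swap_bijOn_of_mapsTo hT).image_eq
    calc g' '' (B ∩ Set.Ico p.top m) = (F ∘ Equiv.swap i j) '' (B ∩ Set.Ico p.top m) := by
          apply Set.image_congr
          intro x _
          exact hg' x
      _ = F '' (Equiv.swap i j '' (B ∩ Set.Ico p.top m)) := by rw [Set.image_comp]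
      _ = F '' (B ∩ Set.Ico p.top m) := by rw [hsw]
  refine ⟨hclaim, ?_⟩
  set g : ℕ → ℕ := fun n => if n < p.top then p.f n else if n < m then g' n else n with hgdef
  have hmax : (insert m p.a).max' ⟨m, Finset.mem_insert_self m p.a⟩ = m := by
    apply le_antisymm
    · apply Finset.max'_le
      intro x hx
      rcases Finset.mem_insert.mp hx with h | h
      · exact h.le
      · exact le_trans (Finset.le_max' _ _ h) htoplt.le
    · exact Finset.le_max' _ _ (Finset.mem_insert_self m p.a)
  -- bijectivity pieces
  have hbij_low : Set.BijOn g (Set.Iio p.top) (Set.Iio p.top) :=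
    (p.f_seg p.top htopa).congr (fun n hn => (if_pos hn).symm)
  have hF_top : Set.BijOn F (Set.Iio p.top) (Set.Iio p.top) := S.F_seg p.α p.α_mem p.top p.max_mem
  have hF_m : Set.BijOn F (Set.Iio m) (Set.Iio m) := S.F_seg p.α p.α_mem m hm
  have hF_ico : Set.BijOn F (Set.Ico p.top m) (Set.Ico p.top m) :=
    bijOn_Ico_of_bijOn_Iio_s13 htoplt.le hF_top hF_m
  have hsw_ico : Set.BijOn (Equiv.swap i j) (Set.Ico p.top m) (Set.Ico p.top m) := by
    apply swap_bijOn_of_mapsTo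
    intro y hy
    rw [Equiv.swap_apply_def]
    split_ifs with h1 h2
    · exact hjIco
    · exact hiIco
    · exact hy
  have hbij_g' : Set.BijOn g' (Set.Ico p.top m) (Set.Ico p.top m) :=
    (hF_ico.comp hsw_ico).congr (fun n _ => (hg' n).symm)
  have hbij_high : Set.BijOn g (Set.Ico p.top m) (Set.Ico p.top m) := by
    apply hbij_g'.congr
    intro n hn
    simp only [hgdef]
    rw [if_neg (not_lt.mpr hn.1), if_pos hn.2]
  have hunion : Set.Iio p.top ∪ Set.Ico p.top m = Set.Iio m := Set.Iio_union_Ico_eq_Iio htoplt.le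
  have hbij_m : Set.BijOn g (Set.Iio m) (Set.Iio m) := by
    rw [← hunion]
    refine Set.BijOn.union hbij_low hbij_high ?_
    intro x hx y hy hxy
    rcases hx with hx | hx <;> rcases hy with hy | hy
    · exact hbij_low.injOn hx hy hxy
    · exfalso
      have h1 := hbij_low.mapsTo hx
      have h2 := hbij_high.mapsTo hy
      rw [hxy] at h1
      exact absurd h2.1 (not_le.mpr h1)
    · exfalso
      have h1 := hbij_low.mapsTo hy
      have h2 := hbij_high.mapsTo hx
      rw [← hxy] at h1
      exact absurd h2.1 (not_le.mpr h1)
    · exact hbij_high.injOn hx hy hxy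
  refine ⟨⟨insert m p.a, g, p.α, p.Alg, ⟨m, Finset.mem_insert_self m p.a⟩, ?_, ?_,
      p.α_mem, ?_, p.Alg_fin⟩, rfl, rfl, rfl, fun n => rfl, ?_⟩
  · -- f_seg
    intro k hk
    rcases Finset.mem_insert.mp hk with h | h
    · exact h ▸ hbij_m
    · have hk' : k ≤ p.top := Finset.le_max' _ _ h
      exact (p.f_seg k h).congr (fun n hn => (if_pos (lt_of_lt_of_le hn hk')).symm)
  · -- f_pad
    intro n hn
    rw [hmax] at hn
    simp only [hgdef]
    rw [if_neg (by omega), if_neg (by omega)]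
  · -- max_mem
    rw [hmax]
    exact hm
  · -- le
    have hqtop : (insert m p.a).max' ⟨m, Finset.mem_insert_self m p.a⟩ = m := hmax
    refine ⟨Finset.subset_insert _ _, ?_, ?_, le_rfl, le_rfl, ?_, ?_⟩
    · rw [Finset.filter_insert, if_neg (not_le.mpr htoplt)]
      exact Finset.filter_eq_self.mpr (fun x hx => Finset.le_max' _ _ hx)
    · intro k hk
      exact if_pos hk
    · intro n hn
      rcases hn with hn | hn
      · exact hn.1
      · have : n = m := by
          rcases hn with ⟨hn1, hn2⟩
          rcases Finset.mem_insert.mp hn1 with h | h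
          · exact h
          · exact absurd h hn2
        exact this ▸ hm
    · intro B hB
      constructor
      · intro m' hm' n' hn' hm't hm'n'
        have hn'm : n' = m := by
          rcases Finset.mem_insert.mp hn' with h | h
          · exact h
          · exact absurd (Finset.le_max' _ _ h) (not_le.mpr (lt_of_le_of_lt hm't hm'n'))
        have hm'top : m' = p.top := by
          rcases Finset.mem_insert.mp hm' with h | h
          · omega
          · exact le_antisymm (Finset.le_max' _ _ h) hm't
        rw [hn'm, hm'top]
        have : g '' (B ∩ Set.Ico p.top m) = g' '' (B ∩ Set.Ico p.top m) := by
          apply Set.image_congr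
          intro x hx
          simp only [hgdef]
          rw [if_neg (not_lt.mpr hx.2.1), if_pos hx.2.2]
        rw [this]
        exact hclaim B hB.1
      · intro m' _ n' _ _ _
        rfl
end

section
/- Let 𝔖 = {(A_ξ, F_ξ, 𝔅_ξ)}_{ξ∈W} be a tower of permutations and let C' ⊆ W be cofinal in W (for every ξ ∈ W there is ζ ∈ C' with ξ ≤ ζ). Then the set {p ∈ ℚ(𝔖) : α^p ∈ C'} is dense in ℚ(𝔖). -/

lemma bijOn_Ico_aux {g : ℕ → ℕ} {m n : ℕ}
    (h1 : Set.BijOn g (Set.Iio m) (Set.Iio m))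
    (h2 : Set.BijOn g (Set.Iio n) (Set.Iio n)) :
    Set.BijOn g (Set.Ico m n) (Set.Ico m n) := by
  refine ⟨?_, h2.injOn.mono Set.Ico_subset_Iio_self, ?_⟩
  · intro x hx
    refine ⟨?_, h2.mapsTo hx.2⟩
    by_contra hlt
    push_neg at hlt
    obtain ⟨x', hx', hx'e⟩ := h1.surjOn hlt
    have hxx : x' = x := h2.injOn (lt_trans hx' (lt_of_le_of_lt hx.1 hx.2)) hx.2 hx'e
    exact absurd (hxx ▸ hx') (not_lt.2 hx.1)
  · intro y hy
    obtain ⟨x, hx, hxe⟩ := h2.surjOn hy.2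
    refine ⟨x, ⟨?_, hx⟩, hxe⟩
    by_contra hlt
    push_neg at hlt
    exact absurd (hxe ▸ h1.mapsTo hlt) (not_lt.2 hy.1)

lemma image_inter_bijOn_aux {g : ℕ → ℕ} (hg : Function.Injective g) {s : Set ℕ}
    (h : Set.BijOn g s s) (B : Set ℕ) : g '' (B ∩ s) = g '' B ∩ s := by
  ext y
  constructor
  · rintro ⟨x, ⟨hxB, hxs⟩, rfl⟩
    exact ⟨⟨x, hxB, rfl⟩, h.mapsTo hxs⟩
  · rintro ⟨⟨x, hxB, rfl⟩, hys⟩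
    obtain ⟨x', hx', he⟩ := h.surjOn hys
    exact ⟨x, ⟨hxB, hg he ▸ hx'⟩, rfl⟩

/-- If `C' ⊆ W` is cofinal in `W` then the set `{p ∈ ℚ(𝔖) : α^p ∈ C'}` is dense
in `ℚ(𝔖)`. -/
theorem dense_alpha_mem_cofinal (W : Set Ordinal) (S : Tower W)
    (C' : Set Ordinal) (hsub : C' ⊆ W) (hcof : ∀ ξ ∈ W, ∃ ζ ∈ C', ξ ≤ ζ) :
    QCond.IsDense {p : QCond S | p.α ∈ C'} := by
  intro p
  obtain ⟨ζ, hζC, hαζ⟩ := hcof p.α p.α_mem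
  have hζW : ζ ∈ W := hsub hζC
  have hαW : p.α ∈ W := p.α_mem
  -- finite bad sets
  have hT1 : (S.A ζ \ S.A p.α).Finite := by
    rcases eq_or_lt_of_le hαζ with h | h
    · rw [← h, Set.diff_self]; exact Set.finite_empty
    · exact S.A_ae_sub _ hαW _ hζW h
  have hT2 : (⋃ B ∈ p.Alg ∩ S.Alg p.α, symmDiff (S.F ζ '' B) (S.F p.α '' B)).Finite := by
    refine Set.Finite.biUnion (p.Alg_fin.1.inter_of_left _) (fun B hB => ?_)
    rcases eq_or_lt_of_le hαζ with h | h
    · rw [← h, symmDiff_self]; exact Set.finite_empty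
    · exact S.F_ae_eq _ hαW _ hζW h B hB.2
  have hTfin : ((S.A ζ \ S.A p.α) ∪
      (⋃ B ∈ p.Alg ∩ S.Alg p.α, symmDiff (S.F ζ '' B) (S.F p.α '' B)) ∪ {p.top}).Finite :=
    (hT1.union hT2).union (Set.finite_singleton _)
  obtain ⟨b, hb⟩ := hTfin.bddAbove
  obtain ⟨N, hNζ, hbN⟩ := (S.A_inf ζ hζW).exists_gt b
  have hNtop : p.top < N :=
    lt_of_le_of_lt (hb (Or.inr rfl)) hbN
  have hNα : N ∈ S.A p.α := by
    by_contra hc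
    exact absurd (hb (Or.inl (Or.inl ⟨hNζ, hc⟩))) (not_le.2 hbN)
  have htail : ∀ k ∈ S.A ζ, N ≤ k → k ∈ S.A p.α := by
    intro k hk hNk
    by_contra hc
    exact absurd (hb (Or.inl (Or.inl ⟨hk, hc⟩))) (not_le.2 (lt_of_lt_of_le hbN hNk))
  have hsd : ∀ B ∈ p.Alg ∩ S.Alg p.α, ∀ y, N ≤ y →
      (y ∈ S.F ζ '' B ↔ y ∈ S.F p.α '' B) := by
    intro B hB y hNy
    by_contra hc
    have hy : y ∈ symmDiff (S.F ζ '' B) (S.F p.α '' B) := by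
      rw [Set.mem_symmDiff]
      tauto
    have : y ≤ b := hb (Or.inl (Or.inr (Set.mem_biUnion hB hy)))
    exact absurd this (not_le.2 (lt_of_lt_of_le hbN hNy))
  -- define the extension
  set qa : Finset ℕ := insert N p.a with hqa
  have hqa_ne : qa.Nonempty := Finset.insert_nonempty _ _
  have hqtop : qa.max' hqa_ne = N := by
    refine le_antisymm (Finset.max'_le _ _ _ ?_) (Finset.le_max' _ _ (Finset.mem_insert_self _ _))
    intro y hy
    rcases Finset.mem_insert.1 hy with rfl | hy
    · exact le_rfl
    · exact le_trans (Finset.le_max' _ _ hy) (le_of_lt hNtop)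
  set qf : ℕ → ℕ := fun i => if i < p.top then p.f i else if i < N then S.F p.α i else i
    with hqf
  have hbijIco : Set.BijOn (S.F p.α) (Set.Ico p.top N) (Set.Ico p.top N) :=
    bijOn_Ico_aux (S.F_seg _ hαW _ p.max_mem) (S.F_seg _ hαW _ hNα)
  have hqf_low : ∀ i, i < p.top → qf i = p.f i := by
    intro i hi; simp [hqf, hi]
  have hqf_mid : ∀ i, p.top ≤ i → i < N → qf i = S.F p.α i := by
    intro i h1 h2; simp [hqf, not_lt.2 h1, h2]
  have hqf_pad : ∀ i, N ≤ i → qf i = i := by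
    intro i hi
    have h1 : ¬ i < p.top := not_lt.2 (le_trans (le_of_lt hNtop) hi)
    have h2 : ¬ i < N := not_lt.2 hi
    simp [hqf, h1, h2]
  have hqf_seg : ∀ m ∈ qa, Set.BijOn qf (Set.Iio m) (Set.Iio m) := by
    intro m hm
    rcases Finset.mem_insert.1 hm with hmN | hm
    · -- m = N
      rw [hmN]
      have b1 : Set.BijOn qf (Set.Iio p.top) (Set.Iio p.top) :=
        (p.f_seg p.top (p.a.max'_mem p.a_ne)).congr
          (fun x hx => (hqf_low x hx).symm)
      have b2 : Set.BijOn qf (Set.Ico p.top N) (Set.Ico p.top N) :=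
        hbijIco.congr (fun x hx => (hqf_mid x hx.1 hx.2).symm)
      have hinj : Set.InjOn qf (Set.Iio p.top ∪ Set.Ico p.top N) := by
        intro x hx y hy hxy
        rcases hx with hx | hx <;> rcases hy with hy | hy
        · exact b1.injOn hx hy hxy
        · exact absurd (hxy ▸ b1.mapsTo hx) (not_lt.2 (b2.mapsTo hy).1)
        · exact absurd (hxy ▸ b2.mapsTo hx).1 (not_le.2 (b1.mapsTo hy))
        · exact b2.injOn hx hy hxy
      have := (b1.union b2 hinj)
      rwa [Set.Iio_union_Ico_eq_Iio (le_of_lt hNtop)] at this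
    · -- m ∈ p.a
      have hmtop : m ≤ p.top := Finset.le_max' _ _ hm
      exact (p.f_seg m hm).congr
        (fun x hx => (hqf_low x (lt_of_lt_of_le hx hmtop)).symm)
  refine ⟨⟨qa, qf, ζ, p.Alg, hqa_ne, hqf_seg, ?_, hζW, ?_, p.Alg_fin⟩, hζC, ?_⟩
  · intro i hi
    exact hqf_pad i (hqtop ▸ hi)
  · rw [hqtop]; exact hNζ
  -- the ordering
  refine ⟨Finset.subset_insert _ _, ?_, hqf_low, subset_rfl, hαζ, ?_, ?_⟩
  · -- filter
    ext n
    simp only [hqa, Finset.mem_filter, Finset.mem_insert]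
    constructor
    · rintro ⟨rfl | hn, hle⟩
      · exact absurd hle (not_le.2 hNtop)
      · exact hn
    · intro hn
      exact ⟨Or.inr hn, Finset.le_max' _ _ hn⟩
  · -- subset of A p.α
    intro x hx
    rcases hx with ⟨hx1, hx2⟩ | ⟨hx1, hx2⟩
    · exact htail x hx1 (le_trans (le_of_eq hqtop.symm) hx2)
    · rcases Finset.mem_insert.1 (by exact_mod_cast hx1) with rfl | hx
      · exact hNα
      · exact absurd hx (by simpa using hx2)
  · -- the main condition on algebras
    intro B hB
    constructor
    · intro m hm n hn hpm hmn
      have hn' : n = N := by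
        rcases Finset.mem_insert.1 hn with rfl | hn
        · rfl
        · exact absurd (Finset.le_max' _ _ hn)
            (not_le.2 (lt_of_le_of_lt hpm hmn))
      subst hn'
      have hm' : m = p.top := by
        rcases Finset.mem_insert.1 hm with rfl | hm
        · exact absurd hmn (lt_irrefl _)
        · exact le_antisymm (Finset.le_max' _ _ hm) hpm
      subst hm'
      apply Set.image_congr
      intro x hx
      exact hqf_mid x hx.2.1 hx.2.2
    · intro m hm n hn hNm hmn
      have hNm' : N ≤ m := le_trans (le_of_eq hqtop.symm) hNm
      have hmα : m ∈ S.A p.α := htail m hm hNm'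
      have hnα : n ∈ S.A p.α := htail n hn (le_trans hNm' (le_of_lt hmn))
      have e1 : S.F ζ '' (B ∩ Set.Ico m n) = S.F ζ '' B ∩ Set.Ico m n :=
        image_inter_bijOn_aux (S.F_bij ζ hζW).injective
          (bijOn_Ico_aux (S.F_seg _ hζW _ hm) (S.F_seg _ hζW _ hn)) B
      have e2 : S.F p.α '' (B ∩ Set.Ico m n) = S.F p.α '' B ∩ Set.Ico m n :=
        image_inter_bijOn_aux (S.F_bij _ hαW).injective
          (bijOn_Ico_aux (S.F_seg _ hαW _ hmα) (S.F_seg _ hαW _ hnα)) B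
      rw [e1, e2]
      ext y
      simp only [Set.mem_inter_iff]
      constructor
      · rintro ⟨h1, h2⟩
        exact ⟨(hsd B hB y (le_trans hNm' h2.1)).mp h1, h2⟩
      · rintro ⟨h1, h2⟩
        exact ⟨(hsd B hB y (le_trans hNm' h2.1)).mpr h1, h2⟩
end
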